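/- arXiv:1604.03483 — 9 statements merged into one kernel-verified Lean document; each statement's English description precedes it below -/
import Mathlib

section
/- Let P = (0,L)×(0,H) with L, H > 0, and let w₁(x) = R₁x + b₁, w₂(x) = R₂x + b₂ be affine maps with R₁, R₂ ∈ SO(2), b₁, b₂ ∈ ℝ². If u ∈ W^{1,2}(P; ℝ²) satisfies u = w₁ on the bottom edge ∂P ∩ {x₂ = 0} and u = w₂ on the top edge ∂P ∩ {x₂ = H} (in the sense of traces), then ∫_P |∂₂u|² dx ≥ (L³/(24H)) |R₁ − R₂|². -/
open Matrix Set

noncomputable section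

/-- `SO(2)`: real 2×2 special orthogonal matrices. -/
def SO2 (R : Matrix (Fin 2) (Fin 2) ℝ) : Prop := R * Rᵀ = 1 ∧ R.det = 1

/-- Squared Euclidean norm of a vector in ℝ². -/
def sq2 (v : Fin 2 → ℝ) : ℝ := v 0 ^ 2 + v 1 ^ 2

/-- Perpendicular vector `s^⊥ = (-s₂, s₁)`. -/
def perp (s : Fin 2 → ℝ) : Fin 2 → ℝ := ![-(s 1), s 0]

open MeasureTheory intervalIntegral

/-- Squared Frobenius norm of a 2×2 matrix. -/
def frob2 (A : Matrix (Fin 2) (Fin 2) ℝ) : ℝ := ∑ i, ∑ j, (A i j) ^ 2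

/-- Cauchy–Schwarz for integrals over `Ioo 0 H`. -/
lemma cs_slice {H : ℝ} (hH : 0 < H) (f : ℝ → ℝ)
    (hf : IntegrableOn f (Ioo 0 H)) (hf2 : IntegrableOn (fun t => f t ^ 2) (Ioo 0 H)) :
    (∫ t in Ioo (0:ℝ) H, f t) ^ 2 ≤ H * ∫ t in Ioo (0:ℝ) H, f t ^ 2 := by
  set I := ∫ t in Ioo (0:ℝ) H, f t with hI
  have h0 : 0 ≤ ∫ t in Ioo (0:ℝ) H, (f t - I / H) ^ 2 :=
    integral_nonneg fun t => sq_nonneg _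
  have hsub : IntegrableOn (fun t => f t ^ 2 - 2 * (I / H) * f t) (Ioo 0 H) :=
    hf2.sub (hf.const_mul _)
  have hconst : IntegrableOn (fun _ : ℝ => (I / H) ^ 2) (Ioo 0 H) :=
    integrableOn_const (by simp [Real.volume_Ioo]) (by simp)
  have hexp : ∫ t in Ioo (0:ℝ) H, (f t - I / H) ^ 2
      = (∫ t in Ioo (0:ℝ) H, f t ^ 2) - 2 * (I / H) * I + (I / H) ^ 2 * H := by
    have h1 : ∀ t, (f t - I / H) ^ 2 = (f t ^ 2 - 2 * (I / H) * f t) + (I / H) ^ 2 := by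
      intro t; ring
    simp_rw [h1]
    rw [integral_add hsub hconst, integral_sub hf2 (hf.const_mul _),
      MeasureTheory.integral_const_mul, MeasureTheory.integral_const]
    simp [Real.volume_Ioo, ENNReal.toReal_ofReal hH.le, max_eq_left hH.le, ← hI]; ring
  rw [hexp] at h0
  have h2 : I ^ 2 / H ≤ ∫ t in Ioo (0:ℝ) H, f t ^ 2 := by
    have : 2 * (I / H) * I - (I / H) ^ 2 * H = I ^ 2 / H := by field_simp; ring
    linarith
  calc I ^ 2 = (I ^ 2 / H) * H := by field_simp
    _ ≤ (∫ t in Ioo (0:ℝ) H, f t ^ 2) * H := mul_le_mul_of_nonneg_right h2 hH.le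
    _ = H * ∫ t in Ioo (0:ℝ) H, f t ^ 2 := mul_comm _ _

/-- Structure of `SO(2)` matrices. -/
lemma so2_entries {R : Matrix (Fin 2) (Fin 2) ℝ} (hR : SO2 R) :
    R 1 1 = R 0 0 ∧ R 0 1 = -(R 1 0) := by
  obtain ⟨ho, hd⟩ := hR
  have h00 := congrFun (congrFun ho 0) 0
  have h01 := congrFun (congrFun ho 0) 1
  have h11 := congrFun (congrFun ho 1) 1
  simp [Matrix.mul_apply, Fin.sum_univ_two, Matrix.one_apply] at h00 h01 h11
  rw [Matrix.det_fin_two] at hd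
  constructor
  · linear_combination (-(R 1 1)) * hd + (R 0 0) * h11 - (R 1 0) * h01
  · linear_combination (-(R 0 1)) * hd - (R 1 0) * h00 + (R 0 0) * h01

/-- Explicit integral of a quadratic polynomial over `Ioo 0 L`. -/
lemma poly_int (L : ℝ) (hL : 0 < L) (s p q : ℝ) :
    ∫ x in Ioo (0:ℝ) L, (s * x ^ 2 + 2 * p * x + q)
      = s * L ^ 3 / 3 + p * L ^ 2 + q * L := by
  rw [← integral_Ioc_eq_integral_Ioo, ← intervalIntegral.integral_of_le hL.le]
  have : ∫ x in (0:ℝ)..L, (s * x ^ 2 + 2 * p * x + q)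
      = (fun x => s / 3 * x ^ 3 + p * x ^ 2 + q * x) L
        - (fun x => s / 3 * x ^ 3 + p * x ^ 2 + q * x) 0 := by
    apply intervalIntegral.integral_eq_sub_of_hasDerivAt
    · intro x _
      have h := (((hasDerivAt_pow 3 x).const_mul (s/3)).add
        ((hasDerivAt_pow 2 x).const_mul p)).add ((hasDerivAt_id x).const_mul q)
      convert h using 1
      · rfl
      · push_cast; ring
    · exact (Continuous.intervalIntegrable (by continuity) _ _)
  rw [this]; simp; ring


/-- Final algebraic inequality. -/
lemma alg_final (L H S P Q : ℝ) (hL : 0 < L) (hH : 0 < H)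
    (hS : 0 ≤ S) (hQ : 0 ≤ Q) (hPQ : P ^ 2 ≤ S * Q) :
    L ^ 3 / (24 * H) * (2 * S) ≤ (S/H) * L ^ 3 / 3 + (P/H) * L ^ 2 + (Q/H) * L := by
  have key' : L ^ 3 * S / 12 ≤ S * L ^ 3 / 3 + P * L ^ 2 + Q * L := by
    rcases eq_or_lt_of_le hS with hS0 | hS0
    · have hP0 : P = 0 := by nlinarith [sq_nonneg P]
      rw [← hS0, hP0]
      nlinarith [mul_nonneg hQ hL.le]
    · nlinarith [mul_nonneg hL.le (sq_nonneg (L * S / 2 + P)),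
        mul_le_mul_of_nonneg_left hPQ hL.le]
  have e1 : L ^ 3 / (24 * H) * (2 * S) = (L ^ 3 * S / 12) / H := by
    field_simp; ring
  have e2 : (S/H) * L ^ 3 / 3 + (P/H) * L ^ 2 + (Q/H) * L
      = (S * L ^ 3 / 3 + P * L ^ 2 + Q * L) / H := by
    field_simp
  rw [e1, e2]
  gcongr

/-- Let `P = (0,L)×(0,H)` and let `w_i(x) = R_i x + b_i` be affine
maps with `R_i ∈ SO(2)`. If `u ∈ W^{1,2}(P;ℝ²)` (encoded via its vertical weak
derivative `g = ∂₂u`, with `u(x₁,·)` absolutely continuous for a.e. `x₁`) has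
trace `w₁` on the bottom edge and `w₂` on the top edge, then
`∫_P |∂₂u|² ≥ (L³/(24H))|R₁ − R₂|²`. -/
theorem stmt1 (L H : ℝ) (hL : 0 < L) (hH : 0 < H)
    (R₁ R₂ : Matrix (Fin 2) (Fin 2) ℝ) (hR₁ : SO2 R₁) (hR₂ : SO2 R₂)
    (b₁ b₂ : Fin 2 → ℝ)
    (u g : ℝ → ℝ → (Fin 2 → ℝ))
    (hgInt : IntegrableOn (fun p : ℝ × ℝ => sq2 (g p.1 p.2))
      (Ioo 0 L ×ˢ Ioo 0 H) volume)
    (hgL2 : ∀ᵐ x₁ ∂(volume.restrict (Ioo 0 L)),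
      IntervalIntegrable (fun t => g x₁ t) volume 0 H ∧
      IntegrableOn (fun t => sq2 (g x₁ t)) (Ioo 0 H) volume)
    (hFTC : ∀ᵐ x₁ ∂(volume.restrict (Ioo 0 L)), ∀ t ∈ Icc (0 : ℝ) H,
      u x₁ t = u x₁ 0 + ∫ τ in (0 : ℝ)..t, g x₁ τ)
    (hbot : ∀ᵐ x₁ ∂(volume.restrict (Ioo 0 L)), u x₁ 0 = R₁ *ᵥ ![x₁, 0] + b₁)
    (htop : ∀ᵐ x₁ ∂(volume.restrict (Ioo 0 L)), u x₁ H = R₂ *ᵥ ![x₁, H] + b₂) :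
    L ^ 3 / (24 * H) * frob2 (R₁ - R₂) ≤
      ∫ p in Ioo 0 L ×ˢ Ioo 0 H, sq2 (g p.1 p.2) := by
  obtain ⟨hA₁, hB₁⟩ := so2_entries hR₁
  obtain ⟨hA₂, hB₂⟩ := so2_entries hR₂
  obtain ⟨a0, a1, c0, c1, ha0, ha1, hc0, hc1⟩ :
      ∃ a0 a1 c0 c1 : ℝ, a0 = R₂ 0 0 - R₁ 0 0 ∧ a1 = R₂ 1 0 - R₁ 1 0 ∧
        c0 = H * R₂ 0 1 + b₂ 0 - b₁ 0 ∧ c1 = H * R₂ 1 1 + b₂ 1 - b₁ 1 :=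
    ⟨_, _, _, _, rfl, rfl, rfl, rfl⟩
  have hfrob : frob2 (R₁ - R₂) = 2 * (a0 ^ 2 + a1 ^ 2) := by
    simp only [frob2, Fin.sum_univ_two, Matrix.sub_apply]
    rw [hA₁, hA₂, hB₁, hB₂, ha0, ha1]; ring
  -- Fubini setup
  have hgInt' : Integrable (fun p : ℝ × ℝ => sq2 (g p.1 p.2))
      ((volume.restrict (Ioo 0 L)).prod (volume.restrict (Ioo 0 H))) := by
    have := hgInt
    rw [IntegrableOn, Measure.volume_eq_prod, ← Measure.prod_restrict] at this
    exact this
  have hFub : ∫ p in Ioo 0 L ×ˢ Ioo 0 H, sq2 (g p.1 p.2)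
      = ∫ x₁ in Ioo (0:ℝ) L, ∫ t in Ioo (0:ℝ) H, sq2 (g x₁ t) := by
    rw [Measure.volume_eq_prod, setIntegral_prod _ (by rwa [IntegrableOn,
      ← Measure.volume_eq_prod])]
  have hInner : Integrable (fun x₁ => ∫ t in Ioo (0:ℝ) H, sq2 (g x₁ t))
      (volume.restrict (Ioo 0 L)) := hgInt'.integral_prod_left
  -- pointwise (in x₁) lower bound
  have key : ∀ᵐ x₁ ∂(volume.restrict (Ioo 0 L)),
      (1/H) * ((a0 * x₁ + c0) ^ 2 + (a1 * x₁ + c1) ^ 2)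
        ≤ ∫ t in Ioo (0:ℝ) H, sq2 (g x₁ t) := by
    filter_upwards [hgL2, hFTC, hbot, htop] with x₁ hL2 hftc hb ht
    obtain ⟨hII, hJ⟩ := hL2
    have hval : (∫ τ in (0:ℝ)..H, g x₁ τ) = u x₁ H - u x₁ 0 := by
      rw [hftc H ⟨hH.le, le_rfl⟩]; abel
    have hmeas : AEStronglyMeasurable (g x₁) (volume.restrict (Ioo 0 H)) :=
      (hII.1.mono_set Ioo_subset_Ioc_self).aestronglyMeasurable
    have hcomp : ∀ i : Fin 2,
        ∫ t in Ioo (0:ℝ) H, g x₁ t i = (u x₁ H - u x₁ 0) i := by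
      intro i
      calc ∫ t in Ioo (0:ℝ) H, g x₁ t i
          = ∫ t in Ioc (0:ℝ) H, g x₁ t i := integral_Ioc_eq_integral_Ioo.symm
        _ = ∫ t in Ioc (0:ℝ) H,
              (ContinuousLinearMap.proj (R := ℝ) (φ := fun _ : Fin 2 => ℝ) i)
                (g x₁ t) := rfl
        _ = (ContinuousLinearMap.proj (R := ℝ) (φ := fun _ : Fin 2 => ℝ) i)
              (∫ t in Ioc (0:ℝ) H, g x₁ t) :=
            ContinuousLinearMap.integral_comp_comm _ hII.1
        _ = (∫ τ in (0:ℝ)..H, g x₁ τ) i := by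
            rw [intervalIntegral.integral_of_le hH.le]; rfl
        _ = (u x₁ H - u x₁ 0) i := by rw [hval]
    have hfi : ∀ i : Fin 2, IntegrableOn (fun t => g x₁ t i) (Ioo 0 H) := by
      intro i
      exact Integrable.mono' (hII.1.mono_set Ioo_subset_Ioc_self).norm
        ((continuous_apply i).comp_aestronglyMeasurable hmeas)
        (ae_of_all _ fun t => norm_le_pi_norm _ i)
    have hfi2 : ∀ i : Fin 2, IntegrableOn (fun t => (g x₁ t i) ^ 2) (Ioo 0 H) := by
      intro i
      apply Integrable.mono' hJ
        (((continuous_pow 2).comp (continuous_apply i)).comp_aestronglyMeasurable hmeas)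
      refine ae_of_all _ fun t => ?_
      rw [Real.norm_eq_abs, abs_of_nonneg (sq_nonneg _)]
      fin_cases i <;> simp [sq2] <;>
        nlinarith [sq_nonneg (g x₁ t 0), sq_nonneg (g x₁ t 1)]
    have hcs : ∀ i : Fin 2, (∫ t in Ioo (0:ℝ) H, g x₁ t i) ^ 2
        ≤ H * ∫ t in Ioo (0:ℝ) H, (g x₁ t i) ^ 2 :=
      fun i => cs_slice hH _ (hfi i) (hfi2 i)
    have hsum : (∫ t in Ioo (0:ℝ) H, (g x₁ t 0) ^ 2)
        + (∫ t in Ioo (0:ℝ) H, (g x₁ t 1) ^ 2)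
        = ∫ t in Ioo (0:ℝ) H, sq2 (g x₁ t) := by
      simp only [sq2]
      exact (integral_add (hfi2 0) (hfi2 1)).symm
    have hv0 : (u x₁ H - u x₁ 0) 0 = a0 * x₁ + c0 := by
      simp [ht, hb, Matrix.mulVec, dotProduct, Matrix.vecHead, Matrix.vecTail, Fin.sum_univ_two, ha0, hc0]
      ring
    have hv1 : (u x₁ H - u x₁ 0) 1 = a1 * x₁ + c1 := by
      simp [ht, hb, Matrix.mulVec, dotProduct, Matrix.vecHead, Matrix.vecTail, Fin.sum_univ_two, ha1, hc1]
      ring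
    have h0 := hcs 0; have h1 := hcs 1
    rw [hcomp 0, hv0] at h0; rw [hcomp 1, hv1] at h1
    have hble : (a0 * x₁ + c0) ^ 2 + (a1 * x₁ + c1) ^ 2
        ≤ H * ∫ t in Ioo (0:ℝ) H, sq2 (g x₁ t) := by
      rw [← hsum, mul_add]; exact add_le_add h0 h1
    calc (1/H) * ((a0 * x₁ + c0) ^ 2 + (a1 * x₁ + c1) ^ 2)
        ≤ (1/H) * (H * ∫ t in Ioo (0:ℝ) H, sq2 (g x₁ t)) :=
          mul_le_mul_of_nonneg_left hble (by positivity)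
      _ = ∫ t in Ioo (0:ℝ) H, sq2 (g x₁ t) := by field_simp
  -- integrate the pointwise bound
  have hlow : IntegrableOn
      (fun x₁ => (1/H) * ((a0 * x₁ + c0) ^ 2 + (a1 * x₁ + c1) ^ 2)) (Ioo 0 L) :=
    ((Continuous.integrableOn_Icc (by fun_prop))).mono_set Ioo_subset_Icc_self
  have hmono : (∫ x₁ in Ioo (0:ℝ) L, (1/H) * ((a0 * x₁ + c0) ^ 2 + (a1 * x₁ + c1) ^ 2))
      ≤ ∫ x₁ in Ioo (0:ℝ) L, ∫ t in Ioo (0:ℝ) H, sq2 (g x₁ t) :=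
    integral_mono_ae hlow hInner key
  -- compute the polynomial integral
  have hpoly : (∫ x₁ in Ioo (0:ℝ) L, (1/H) * ((a0 * x₁ + c0) ^ 2 + (a1 * x₁ + c1) ^ 2))
      = ((a0 ^ 2 + a1 ^ 2)/H) * L ^ 3 / 3 + ((a0 * c0 + a1 * c1)/H) * L ^ 2
        + ((c0 ^ 2 + c1 ^ 2)/H) * L := by
    have heq : ∀ x : ℝ, (1/H) * ((a0 * x + c0) ^ 2 + (a1 * x + c1) ^ 2)
        = ((a0 ^ 2 + a1 ^ 2)/H) * x ^ 2 + 2 * ((a0 * c0 + a1 * c1)/H) * x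
          + ((c0 ^ 2 + c1 ^ 2)/H) := by
      intro x; field_simp; ring
    simp_rw [heq]
    exact poly_int L hL _ _ _
  have hPQ : (a0 * c0 + a1 * c1) ^ 2 ≤ (a0 ^ 2 + a1 ^ 2) * (c0 ^ 2 + c1 ^ 2) := by
    nlinarith [sq_nonneg (a0 * c1 - a1 * c0)]
  have hfinal := alg_final L H (a0 ^ 2 + a1 ^ 2) (a0 * c0 + a1 * c1) (c0 ^ 2 + c1 ^ 2)
    hL hH (by positivity) (by positivity) hPQ
  calc L ^ 3 / (24 * H) * frob2 (R₁ - R₂)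
      = L ^ 3 / (24 * H) * (2 * (a0 ^ 2 + a1 ^ 2)) := by rw [hfrob]
    _ ≤ ((a0 ^ 2 + a1 ^ 2)/H) * L ^ 3 / 3 + ((a0 * c0 + a1 * c1)/H) * L ^ 2
        + ((c0 ^ 2 + c1 ^ 2)/H) * L := hfinal
    _ = ∫ x₁ in Ioo (0:ℝ) L, (1/H) * ((a0 * x₁ + c0) ^ 2 + (a1 * x₁ + c1) ^ 2) :=
        hpoly.symm
    _ ≤ ∫ x₁ in Ioo (0:ℝ) L, ∫ t in Ioo (0:ℝ) H, sq2 (g x₁ t) := hmono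
    _ = ∫ p in Ioo 0 L ×ˢ Ioo 0 H, sq2 (g p.1 p.2) := hFub.symm
end
end

section
/- Let F = R(I + γ e₁⊗e₂) and G = Q(I + ζ e₁⊗e₂) with R, Q ∈ SO(2) and γ, ζ ∈ ℝ. Then rank(F − G) = 1 if and only if either (i) R = Q and γ ≠ ζ, or (ii) R ≠ Q and γ − ζ = 2 tan(θ/2), where θ ∈ (−π, π) is the rotation angle of QᵀR, i.e. QᵀR e₁ = (cos θ, sin θ). -/
open Matrix Set

noncomputable section

/-- The rank-one matrix `e₁ ⊗ e₂`. -/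
def E12 : Matrix (Fin 2) (Fin 2) ℝ := vecMulVec ![1, 0] ![0, 1]

lemma rank_one_iff2 (M : Matrix (Fin 2) (Fin 2) ℝ) :
    M.rank = 1 ↔ M ≠ 0 ∧ M.det = 0 := by
  constructor
  · intro h
    constructor
    · rintro rfl
      rw [Matrix.rank_zero] at h
      exact one_ne_zero h.symm
    · by_contra hd
      have hu : IsUnit M := (Matrix.isUnit_iff_isUnit_det M).2 (isUnit_iff_ne_zero.2 hd)
      rw [Matrix.rank_of_isUnit M hu] at h
      simp at h
  · rintro ⟨h0, hd⟩
    have hr : M.rank = Module.finrank ℝ (LinearMap.range M.mulVecLin) := rfl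
    have hle : M.rank ≤ 1 := by
      obtain ⟨v, hv, hMv⟩ := (Matrix.exists_mulVec_eq_zero_iff).2 hd
      have hker : v ∈ LinearMap.ker M.mulVecLin := by
        simpa [Matrix.mulVecLin] using hMv
      have hk1 : 1 ≤ Module.finrank ℝ (LinearMap.ker M.mulVecLin) := by
        rw [Nat.one_le_iff_ne_zero]
        intro hz
        have hbot : LinearMap.ker M.mulVecLin = ⊥ := Submodule.finrank_eq_zero.mp hz
        exact hv (by simpa [hbot] using hker)
      have hrn := LinearMap.finrank_range_add_finrank_ker M.mulVecLin
      have hdim : Module.finrank ℝ (Fin 2 → ℝ) = 2 := by simp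
      omega
    have hge : M.rank ≠ 0 := by
      intro h
      apply h0
      have hbot : LinearMap.range M.mulVecLin = ⊥ := Submodule.finrank_eq_zero.mp h
      have hall : ∀ v, M *ᵥ v = 0 := by
        intro v
        have : M.mulVecLin v ∈ (⊥ : Submodule ℝ (Fin 2 → ℝ)) :=
          hbot ▸ LinearMap.mem_range_self _ v
        simpa [Matrix.mulVecLin] using this
      ext i j
      have := congrFun (hall (Pi.single j 1)) i
      simpa [Matrix.mulVec_single] using this
    omega

lemma key (c s γ ζ : ℝ) (hcs : c ^ 2 + s ^ 2 = 1) :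
    (¬(c = 1 ∧ s = 0 ∧ γ = ζ) ∧ 2 - 2 * c - (γ - ζ) * s = 0) ↔
    ((c = 1 ∧ s = 0) ∧ γ ≠ ζ) ∨ (¬(c = 1 ∧ s = 0) ∧ ∃ θ ∈ Ioo (-Real.pi) Real.pi,
      (c = Real.cos θ ∧ s = Real.sin θ) ∧ γ - ζ = 2 * Real.tan (θ / 2)) := by
  constructor
  · rintro ⟨hne, hdet⟩
    by_cases h1 : c = 1 ∧ s = 0
    · exact Or.inl ⟨h1, fun h => hne ⟨h1.1, h1.2, h⟩⟩
    · refine Or.inr ⟨h1, ?_⟩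
      have hs : s ≠ 0 := by
        intro hs0
        rw [hs0] at hdet
        exact h1 ⟨by linarith, hs0⟩
      have h1c : 0 < 1 + c := by
        by_contra hcc
        push_neg at hcc
        have hs2 : s ^ 2 ≤ 0 := by nlinarith
        exact hs (by nlinarith [sq_nonneg s])
      set x := s / (1 + c) with hxdef
      have hx : 1 + x ^ 2 = 2 / (1 + c) := by
        rw [hxdef, div_pow]
        field_simp
        nlinarith [hcs]
      have hsqrt : Real.sqrt (1 + x ^ 2) ^ 2 = 1 + x ^ 2 :=
        Real.sq_sqrt (by positivity)
      have hxpos : 0 < 1 + x ^ 2 := by positivity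
      refine ⟨2 * Real.arctan x, ⟨?_, ?_⟩, ⟨?_, ?_⟩, ?_⟩
      · have := Real.neg_pi_div_two_lt_arctan x
        linarith
      · have := Real.arctan_lt_pi_div_two x
        linarith
      · rw [Real.cos_two_mul, Real.cos_arctan, one_div, inv_pow, hx,
          Real.sq_sqrt (by positivity : (0:ℝ) ≤ 2 / (1 + c)), inv_div]
        ring
      · rw [Real.sin_two_mul, Real.sin_arctan, Real.cos_arctan, mul_assoc,
          div_mul_div_comm, Real.mul_self_sqrt (by positivity), mul_one, hx, hxdef]
        field_simp
      · have h2 : (γ - ζ) * s = 2 - 2 * c := by linarith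
        have h3 : (γ - ζ) * ((1 + c) * s) = 2 * s * s := by
          linear_combination (1 + c) * h2 - 2 * hcs
        rw [mul_div_cancel_left₀ _ (two_ne_zero (α := ℝ)), Real.tan_arctan, hxdef]
        rw [show (2:ℝ) * (s / (1 + c)) = (2 * s) / (1 + c) by ring, eq_div_iff h1c.ne']
        exact mul_right_cancel₀ hs (by linear_combination h3)
  · rintro (⟨⟨hc, hs⟩, hgz⟩ | ⟨h1, θ, ⟨hθl, hθr⟩, ⟨hcθ, hsθ⟩, htan⟩)
    · exact ⟨fun h => hgz h.2.2, by rw [hc, hs]; ring⟩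
    · refine ⟨fun h => h1 ⟨h.1, h.2.1⟩, ?_⟩
      have hbpos : 0 < Real.cos (θ / 2) :=
        Real.cos_pos_of_mem_Ioo ⟨by linarith, by linarith⟩
      set a := Real.sin (θ / 2) with ha
      set b := Real.cos (θ / 2) with hb
      have hab : a ^ 2 + b ^ 2 = 1 := Real.sin_sq_add_cos_sq _
      have hsin : Real.sin θ = 2 * a * b := by
        rw [ha, hb, ← Real.sin_two_mul]
        congr 1
        ring
      have hcos : Real.cos θ = 2 * b ^ 2 - 1 := by
        rw [hb, ← Real.cos_two_mul]
        congr 1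
        ring
      have htan' : Real.tan (θ / 2) = a / b := Real.tan_eq_sin_div_cos _
      rw [hcθ, hsθ, hsin, hcos, htan, htan']
      field_simp
      ring_nf
      nlinarith [hab]

/-- rank-one connections in `M_{e₁}`: for `F = R(I + γ e₁⊗e₂)`,
`G = Q(I + ζ e₁⊗e₂)` with `R, Q ∈ SO(2)`, `rank(F − G) = 1` iff either `R = Q`
and `γ ≠ ζ`, or `R ≠ Q` and `γ − ζ = 2 tan(θ/2)`, where `θ ∈ (−π, π)` is the
rotation angle of `QᵀR`. -/
theorem stmt3 (R Q : Matrix (Fin 2) (Fin 2) ℝ) (hR : SO2 R) (hQ : SO2 Q)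
    (γ ζ : ℝ) (F G : Matrix (Fin 2) (Fin 2) ℝ)
    (hF : F = R * (1 + γ • E12)) (hG : G = Q * (1 + ζ • E12)) :
    (F - G).rank = 1 ↔
      (R = Q ∧ γ ≠ ζ) ∨
      (R ≠ Q ∧ ∃ θ ∈ Ioo (-Real.pi) Real.pi,
        (Qᵀ * R) *ᵥ ![1, 0] = ![Real.cos θ, Real.sin θ] ∧
        γ - ζ = 2 * Real.tan (θ / 2)) := by
  have hQ' : Qᵀ * Q = 1 := mul_eq_one_comm.mp hQ.1
  set S := Qᵀ * R with hSdef
  have hQS : Q * S = R := by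
    rw [hSdef, ← Matrix.mul_assoc, hQ.1, Matrix.one_mul]
  have hSS : S * Sᵀ = 1 := by
    rw [hSdef, Matrix.transpose_mul, Matrix.transpose_transpose,
      Matrix.mul_assoc, ← Matrix.mul_assoc R, hR.1, Matrix.one_mul, hQ']
  have hSdet : S.det = 1 := by
    rw [hSdef, Matrix.det_mul, Matrix.det_transpose, hQ.2, hR.2, one_mul]
  have e00 := congrFun (congrFun hSS 0) 0
  have e01 := congrFun (congrFun hSS 0) 1
  have e11 := congrFun (congrFun hSS 1) 1
  simp [Matrix.mul_apply, Fin.sum_univ_two, Matrix.one_apply] at e00 e01 e11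
  have hdet2 : S 0 0 * S 1 1 - S 0 1 * S 1 0 = 1 := by
    rw [← Matrix.det_fin_two]; exact hSdet
  have hS11 : S 1 1 = S 0 0 := by
    linear_combination S 0 0 * hdet2 + S 0 1 * e01 - S 1 1 * e00
  have hS01 : S 0 1 = -(S 1 0) := by
    linear_combination -(S 1 0) * hdet2 + S 1 1 * e01 - S 0 1 * e11
  have hcs : S 0 0 ^ 2 + S 1 0 ^ 2 = 1 := by
    rw [hS01] at e00
    nlinarith [e00]
  set N : Matrix (Fin 2) (Fin 2) ℝ :=
    !![S 0 0 - 1, γ * S 0 0 - S 1 0 - ζ; S 1 0, γ * S 1 0 + S 0 0 - 1] with hNdef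
  have hN : N = S * (1 + γ • E12) - (1 + ζ • E12) := by
    ext i j
    fin_cases i <;> fin_cases j <;>
      simp [hNdef, E12, Matrix.mul_apply, Fin.sum_univ_two, Matrix.vecMulVec_apply,
        Matrix.one_apply, hS01, hS11] <;> ring
  have hFG : F - G = Q * N := by
    rw [hF, hG, hN, Matrix.mul_sub, ← Matrix.mul_assoc, hQS]
  have hrank : (F - G).rank = N.rank := by
    rw [hFG]
    exact Matrix.rank_mul_eq_right_of_isUnit_det Q N (by rw [hQ.2]; exact isUnit_one)
  have hdetN : N.det = 2 - 2 * S 0 0 - (γ - ζ) * S 1 0 := by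
    rw [hNdef, Matrix.det_fin_two_of]
    linear_combination hcs
  have hN0 : (N = 0) ↔ (S 0 0 = 1 ∧ S 1 0 = 0 ∧ γ = ζ) := by
    constructor
    · intro h
      have h00 := congrFun (congrFun h 0) 0
      have h10 := congrFun (congrFun h 1) 0
      have h01 := congrFun (congrFun h 0) 1
      simp [hNdef] at h00 h10 h01
      exact ⟨by linarith, h10, by linear_combination h01 - γ * h00 + h10⟩
    · rintro ⟨h1, h2, h3⟩
      ext i j
      fin_cases i <;> fin_cases j <;> simp [hNdef, h1, h2, h3]
  have hRQ : (R = Q) ↔ (S 0 0 = 1 ∧ S 1 0 = 0) := by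
    constructor
    · intro h
      have : S = 1 := by rw [hSdef, h, hQ']
      rw [this]
      constructor <;> simp [Matrix.one_apply]
    · rintro ⟨h1, h2⟩
      have hS1 : S = 1 := by
        ext i j
        fin_cases i <;> fin_cases j <;>
          simp [Matrix.one_apply, h1, h2, hS01, hS11]
      rw [← hQS, hS1, Matrix.mul_one]
  have hmv : ∀ θ : ℝ, (S *ᵥ ![1, 0] = ![Real.cos θ, Real.sin θ]) ↔
      (S 0 0 = Real.cos θ ∧ S 1 0 = Real.sin θ) := by
    intro θ
    constructor
    · intro h
      constructor
      · have := congrFun h 0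
        simpa [Matrix.mulVec, dotProduct, Fin.sum_univ_two] using this
      · have := congrFun h 1
        simpa [Matrix.mulVec, dotProduct, Fin.sum_univ_two] using this
    · rintro ⟨h1, h2⟩
      funext i
      fin_cases i <;>
        simp [Matrix.mulVec, dotProduct, Fin.sum_univ_two, h1, h2]
  rw [hrank, rank_one_iff2, hdetN]
  simp only [ne_eq, hN0, hRQ, hmv]
  exact key (S 0 0) (S 1 0) γ ζ hcs
end
end

section
/- Let F = R(I + γ s⊗m), G = Q(I + ζ s⊗m) with R ≠ Q ∈ SO(2), γ, ζ ∈ ℝ satisfying γ − ζ = 2 tan(θ/2) where θ is the rotation angle of QᵀR. Then F − G = [(γ−ζ)/(4 + (γ−ζ)²)] Q ((ζ−γ)s + 2m) ⊗ (2s + (γ+ζ)m). -/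
open Matrix Set

noncomputable section

/-- explicit form of the rank-one difference: for `F = R(I + γ s⊗m)`,
`G = Q(I + ζ s⊗m)` with `R ≠ Q ∈ SO(2)` and `γ − ζ = 2 tan(θ/2)`, where `θ` is the
rotation angle of `QᵀR`, one has
`F − G = ((γ−ζ)/(4+(γ−ζ)²)) Q((ζ−γ)s + 2m) ⊗ (2s + (γ+ζ)m)`. -/
theorem stmt4 (s : Fin 2 → ℝ) (hs : sq2 s = 1)
    (R Q : Matrix (Fin 2) (Fin 2) ℝ) (hR : SO2 R) (hQ : SO2 Q) (hRQ : R ≠ Q)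
    (γ ζ θ : ℝ) (hθ : θ ∈ Ioo (-Real.pi) Real.pi)
    (hangle : (Qᵀ * R) *ᵥ ![1, 0] = ![Real.cos θ, Real.sin θ])
    (hγζ : γ - ζ = 2 * Real.tan (θ / 2))
    (F G : Matrix (Fin 2) (Fin 2) ℝ)
    (hF : F = R * (1 + γ • vecMulVec s (perp s)))
    (hG : G = Q * (1 + ζ • vecMulVec s (perp s))) :
    F - G = ((γ - ζ) / (4 + (γ - ζ) ^ 2)) •
      vecMulVec (Q *ᵥ ((ζ - γ) • s + (2 : ℝ) • perp s))
        ((2 : ℝ) • s + (γ + ζ) • perp s) := by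
  set co := Real.cos (θ/2) with hco_def
  set si := Real.sin (θ/2) with hsi_def
  have hcopos : 0 < co := by
    apply Real.cos_pos_of_mem_Ioo
    constructor <;> [linarith [hθ.1]; linarith [hθ.2]]
  have hco : co ≠ 0 := ne_of_gt hcopos
  have hpy : si ^ 2 + co ^ 2 = 1 := Real.sin_sq_add_cos_sq _
  have hcosθ : Real.cos θ = co ^ 2 - si ^ 2 := by
    have h := Real.cos_two_mul (θ/2)
    rw [show 2 * (θ/2) = θ by ring] at h
    rw [h]; nlinarith [hpy]
  have hsinθ : Real.sin θ = 2 * si * co := by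
    have h := Real.sin_two_mul (θ/2)
    rw [show 2 * (θ/2) = θ by ring] at h
    rw [h]
  have htan : γ - ζ = 2 * (si / co) := by
    rw [hγζ, Real.tan_eq_sin_div_cos]
  have hD : (0:ℝ) < 4 + (γ - ζ) ^ 2 := by positivity
  have hC : (4 + (γ - ζ) ^ 2) * Real.cos θ = 4 - (γ - ζ) ^ 2 := by
    rw [htan, hcosθ]; field_simp
    linear_combination (4*(co^2 - si^2)) * hpy
  have hS : (4 + (γ - ζ) ^ 2) * Real.sin θ = 4 * (γ - ζ) := by
    rw [htan, hsinθ]; field_simp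
    linear_combination (4*si) * hpy
  -- Q orthogonality
  have hQQ : Qᵀ * Q = 1 := by rw [mul_eq_one_comm]; exact hQ.1
  set M := Qᵀ * R with hM_def
  have hMM : Mᵀ * M = 1 := by
    have hRR : Rᵀ * R = 1 := by rw [mul_eq_one_comm]; exact hR.1
    calc Mᵀ * M = Rᵀ * (Q * Qᵀ) * R := by
            simp [hM_def, Matrix.transpose_mul, Matrix.mul_assoc]
      _ = 1 := by rw [hQ.1, Matrix.mul_one, hRR]
  have hdetM : M.det = 1 := by
    simp [hM_def, Matrix.det_mul, Matrix.det_transpose, hR.2, hQ.2]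
  have ha : M 0 0 = Real.cos θ := by
    have h := congrFun hangle 0
    simpa [Matrix.mulVec, dotProduct, Fin.sum_univ_two] using h
  have hcc : M 1 0 = Real.sin θ := by
    have h := congrFun hangle 1
    simpa [Matrix.mulVec, dotProduct, Fin.sum_univ_two] using h
  have h1 : M 0 0 * M 0 1 + M 1 0 * M 1 1 = 0 := by
    have h := congrFun (congrFun hMM 0) 1
    simpa [Matrix.mul_apply, Fin.sum_univ_two, Matrix.one_apply] using h
  have h2 : M 0 0 * M 1 1 - M 0 1 * M 1 0 = 1 := by
    have h := hdetM
    rw [Matrix.det_fin_two] at h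
    linarith
  have h3 : M 0 0 ^ 2 + M 1 0 ^ 2 = 1 := by
    rw [ha, hcc]; nlinarith [Real.sin_sq_add_cos_sq θ]
  have hb : M 0 1 = -Real.sin θ := by
    rw [← hcc]
    linear_combination M 0 0 * h1 - M 1 0 * h2 - M 0 1 * h3
  have hd : M 1 1 = Real.cos θ := by
    rw [← ha]
    linear_combination M 1 0 * h1 + M 0 0 * h2 - M 1 1 * h3
  have hRQM : R = Q * M := by
    rw [hM_def, ← Matrix.mul_assoc, hQ.1, Matrix.one_mul]
  have hs' : s 0 ^ 2 + s 1 ^ 2 = 1 := hs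
  have hMeq : M = !![Real.cos θ, -Real.sin θ; Real.sin θ, Real.cos θ] := by
    ext i j
    fin_cases i <;> fin_cases j <;> simp [ha, hb, hcc, hd]
  have key2 : ∀ i j, (4 + (γ - ζ) ^ 2) *
      ((M * (1 + γ • vecMulVec s (perp s)) - (1 + ζ • vecMulVec s (perp s))) i j) =
      (γ - ζ) * (((ζ - γ) • s + (2 : ℝ) • perp s) i * (((2 : ℝ) • s + (γ + ζ) • perp s) j)) := by
    intro i j
    fin_cases i <;> fin_cases j
    · simp only [hMeq, Matrix.sub_apply, Matrix.add_apply, Matrix.mul_apply,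
        Fin.sum_univ_two, Matrix.smul_apply, Matrix.one_apply, Matrix.vecMulVec_apply,
        smul_eq_mul, Pi.add_apply, Pi.smul_apply, perp, Matrix.of_apply,
        Matrix.cons_val', Matrix.cons_val_zero, Matrix.cons_val_one, Matrix.head_cons,
        Matrix.head_fin_const, Matrix.cons_val_fin_one, Fin.isValue]
      norm_num
      linear_combination (1 - γ * s 0 * s 1) * hC + (γ * s 1 ^ 2) * hS + 2 * (γ - ζ)^2 * hs'
    · simp only [hMeq, Matrix.sub_apply, Matrix.add_apply, Matrix.mul_apply,
        Fin.sum_univ_two, Matrix.smul_apply, Matrix.one_apply, Matrix.vecMulVec_apply,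
        smul_eq_mul, Pi.add_apply, Pi.smul_apply, perp, Matrix.of_apply,
        Matrix.cons_val', Matrix.cons_val_zero, Matrix.cons_val_one, Matrix.head_cons,
        Matrix.head_fin_const, Matrix.cons_val_fin_one, Fin.isValue]
      norm_num
      linear_combination (γ * s 0 ^ 2) * hC + (-(1 + γ * s 0 * s 1)) * hS + 4 * (γ - ζ) * hs'
    · simp only [hMeq, Matrix.sub_apply, Matrix.add_apply, Matrix.mul_apply,
        Fin.sum_univ_two, Matrix.smul_apply, Matrix.one_apply, Matrix.vecMulVec_apply,
        smul_eq_mul, Pi.add_apply, Pi.smul_apply, perp, Matrix.of_apply,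
        Matrix.cons_val', Matrix.cons_val_zero, Matrix.cons_val_one, Matrix.head_cons,
        Matrix.head_fin_const, Matrix.cons_val_fin_one, Fin.isValue]
      norm_num
      linear_combination (-(γ * s 1 ^ 2)) * hC + (1 - γ * s 0 * s 1) * hS + (-4 * (γ - ζ)) * hs'
    · simp only [hMeq, Matrix.sub_apply, Matrix.add_apply, Matrix.mul_apply,
        Fin.sum_univ_two, Matrix.smul_apply, Matrix.one_apply, Matrix.vecMulVec_apply,
        smul_eq_mul, Pi.add_apply, Pi.smul_apply, perp, Matrix.of_apply,
        Matrix.cons_val', Matrix.cons_val_zero, Matrix.cons_val_one, Matrix.head_cons,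
        Matrix.head_fin_const, Matrix.cons_val_fin_one, Fin.isValue]
      norm_num
      linear_combination (1 + γ * s 0 * s 1) * hC + (γ * s 0 ^ 2) * hS + 2 * (γ - ζ)^2 * hs'
  have key : M * (1 + γ • vecMulVec s (perp s)) - (1 + ζ • vecMulVec s (perp s))
      = ((γ - ζ) / (4 + (γ - ζ) ^ 2)) •
        vecMulVec ((ζ - γ) • s + (2 : ℝ) • perp s) ((2 : ℝ) • s + (γ + ζ) • perp s) := by
    ext i j
    have h := key2 i j
    simp only [Matrix.smul_apply, Matrix.vecMulVec_apply, smul_eq_mul]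
    rw [div_mul_eq_mul_div, eq_div_iff hD.ne']
    linarith [h]
  calc F - G = Q * (M * (1 + γ • vecMulVec s (perp s)) - (1 + ζ • vecMulVec s (perp s))) := by
        rw [hF, hG, hRQM, Matrix.mul_sub, Matrix.mul_assoc]
    _ = ((γ - ζ) / (4 + (γ - ζ) ^ 2)) •
        vecMulVec (Q *ᵥ ((ζ - γ) • s + (2 : ℝ) • perp s)) ((2 : ℝ) • s + (γ + ζ) • perp s) := by
        rw [key]
        ext i j
        simp only [Matrix.mul_apply, Matrix.smul_apply, Matrix.vecMulVec_apply,
          Matrix.mulVec, dotProduct, Fin.sum_univ_two, smul_eq_mul]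
        ring
end
end

section
/- Let s be a unit vector in ℝ², m = s^⊥, and let F, G ∈ M_s with rank(F − G) = 1 and F − G = a ⊗ e₂ for some nonzero a ∈ ℝ². Write F = R(I + γ s⊗m), G = Q(I + ζ s⊗m) with R, Q ∈ SO(2). If s ≠ e₁ (i.e. s₂ ≠ 0) and R ≠ Q, then necessarily γ + ζ = 2 s₁/s₂. -/
open Matrix Set

noncomputable section

lemma so2_structure (R : Matrix (Fin 2) (Fin 2) ℝ) (hR : SO2 R) :
    R 1 1 = R 0 0 ∧ R 1 0 = -(R 0 1) := by
  obtain ⟨horth, hdet⟩ := hR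
  have h00 := congrFun (congrFun horth 0) 0
  have h01 := congrFun (congrFun horth 0) 1
  have h11 := congrFun (congrFun horth 1) 1
  simp [Matrix.mul_apply, Fin.sum_univ_two, Matrix.one_apply] at h00 h01 h11
  rw [Matrix.det_fin_two] at hdet
  constructor
  · linear_combination -(R 1 1) * h00 + R 0 0 * hdet + R 0 1 * h01
  · linear_combination -(R 1 0) * h00 - R 0 1 * hdet + R 0 0 * h01

/-- if `F = R(I + γ s⊗m)` and `G = Q(I + ζ s⊗m)` in `M_s` are
rank-one connected with `F − G = a ⊗ e₂` for some `a ≠ 0`, `s ≠ e₁` (i.e. `s₂ ≠ 0`)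
and `R ≠ Q`, then `γ + ζ = 2 s₁/s₂`. -/
theorem stmt5 (s : Fin 2 → ℝ) (hs : sq2 s = 1) (hs2 : s 1 ≠ 0)
    (R Q : Matrix (Fin 2) (Fin 2) ℝ) (hR : SO2 R) (hQ : SO2 Q) (hRQ : R ≠ Q)
    (γ ζ : ℝ) (F G : Matrix (Fin 2) (Fin 2) ℝ)
    (hF : F = R * (1 + γ • vecMulVec s (perp s)))
    (hG : G = Q * (1 + ζ • vecMulVec s (perp s)))
    (hrank : (F - G).rank = 1)
    (a : Fin 2 → ℝ) (ha : a ≠ 0) (hFG : F - G = vecMulVec a ![0, 1]) :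
    γ + ζ = 2 * s 0 / s 1 := by
  obtain ⟨hR11, hR10⟩ := so2_structure R hR
  obtain ⟨hQ11, hQ10⟩ := so2_structure Q hQ
  set c := R 0 0 with hc
  set d := R 0 1 with hd
  set p := Q 0 0 with hp
  set q := Q 0 1 with hq
  have hRn : c ^ 2 + d ^ 2 = 1 := by
    have h00 := congrFun (congrFun hR.1 0) 0
    simp [Matrix.mul_apply, Fin.sum_univ_two, Matrix.one_apply] at h00
    linear_combination h00
  have hQn : p ^ 2 + q ^ 2 = 1 := by
    have h00 := congrFun (congrFun hQ.1 0) 0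
    simp [Matrix.mul_apply, Fin.sum_univ_two, Matrix.one_apply] at h00
    linear_combination h00
  -- extract column-0 equations from hFG
  subst hF hG
  have e0 := congrFun (congrFun hFG 0) 0
  have e1 := congrFun (congrFun hFG 1) 0
  simp [Matrix.sub_apply, Matrix.mul_apply, Fin.sum_univ_two, Matrix.add_apply,
    Matrix.one_apply, Matrix.smul_apply, vecMulVec_apply, perp, hR10, hR11, hQ10, hQ11,
    smul_eq_mul] at e0 e1
  set s0 := s 0 with hs0
  set s1 := s 1 with hs1
  have hs' : s0 ^ 2 + s1 ^ 2 = 1 := hs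
  set u0 : ℝ := 1 - γ * s0 * s1 with hu0
  set u1 : ℝ := -(γ * s1 ^ 2) with hu1
  set v0 : ℝ := 1 - ζ * s0 * s1 with hv0
  set v1 : ℝ := -(ζ * s1 ^ 2) with hv1
  have E1 : c * u0 + d * u1 = p * v0 + q * v1 := by
    rw [hu0, hu1, hv0, hv1]; linear_combination e0
  have E2 : -d * u0 + c * u1 = -q * v0 + p * v1 := by
    rw [hu0, hu1, hv0, hv1]; linear_combination e1
  -- norms equal
  have hnorm : u0 ^ 2 + u1 ^ 2 = v0 ^ 2 + v1 ^ 2 := by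
    linear_combination (c * u0 + d * u1 + p * v0 + q * v1) * E1 +
      (-d * u0 + c * u1 + (-q * v0 + p * v1)) * E2 -
      (u0 ^ 2 + u1 ^ 2) * hRn + (v0 ^ 2 + v1 ^ 2) * hQn
  have hfact : s1 * (γ - ζ) * (s1 * (γ + ζ) - 2 * s0) = 0 := by
    rw [hu0, hu1, hv0, hv1] at hnorm
    linear_combination hnorm + (ζ ^ 2 - γ ^ 2) * s1 ^ 2 * hs'
  clear hrank hFG e0 e1 hR hQ
  have hs1sq : 0 < s1 ^ 2 := by
    have h := abs_pos.2 hs2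
    calc (0:ℝ) < |s1| ^ 2 := pow_pos h 2
      _ = s1 ^ 2 := sq_abs s1
  have hupos : 0 < u0 ^ 2 + u1 ^ 2 := by
    have key : u0 ^ 2 + u1 ^ 2 = (γ * s1 - s0) ^ 2 + s1 ^ 2 := by
      rw [hu0, hu1]
      linear_combination (γ ^ 2 * s1 ^ 2 - 1) * hs'
    rw [key]
    nlinarith [sq_nonneg (γ * s1 - s0)]
  rcases mul_eq_zero.1 hfact with h1 | h2
  · rcases mul_eq_zero.1 h1 with h | h
    · exact absurd h hs2
    · -- γ = ζ, derive R = Q, contradiction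
      have hγζ : γ = ζ := by linarith
      have huv0 : u0 = v0 := by rw [hu0, hv0, hγζ]
      have huv1 : u1 = v1 := by rw [hu1, hv1, hγζ]
      rw [← huv0, ← huv1] at E1 E2
      set x := c - p with hx
      set y := d - q with hy
      have hxe : x * u0 + y * u1 = 0 := by rw [hx, hy]; linear_combination E1
      have hye : x * u1 - y * u0 = 0 := by rw [hx, hy]; linear_combination E2
      have hxy : (x ^ 2 + y ^ 2) * (u0 ^ 2 + u1 ^ 2) = 0 := by
        linear_combination (x * u0 + y * u1) * hxe + (x * u1 - y * u0) * hye
      have hxy0 : x ^ 2 + y ^ 2 = 0 := by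
        rcases mul_eq_zero.1 hxy with h' | h'
        · exact h'
        · exact absurd h' (ne_of_gt hupos)
      have hx0 : x = 0 := by
        have h2' : x ^ 2 = 0 :=
          le_antisymm (by linarith [sq_nonneg y]) (sq_nonneg x)
        exact pow_eq_zero_iff two_ne_zero |>.1 h2'
      have hy0 : y = 0 := by
        have h2' : y ^ 2 = 0 :=
          le_antisymm (by linarith [sq_nonneg x]) (sq_nonneg y)
        exact pow_eq_zero_iff two_ne_zero |>.1 h2'
      have hcp : c = p := by rw [hx] at hx0; linarith
      have hdq : d = q := by rw [hy] at hy0; linarith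
      exfalso
      apply hRQ
      ext i j
      fin_cases i <;> fin_cases j
      · exact hcp
      · exact hdq
      · show R 1 0 = Q 1 0
        rw [hR10, hQ10, hdq]
      · show R 1 1 = Q 1 1
        rw [hR11, hQ11, hcp]
  · rw [eq_div_iff hs2]
    linear_combination h2
end
end

section
/- Let s ≠ e₁ be a unit vector in ℝ², and let N_s = {F : det F = 1, |Fs| ≤ 1}, M_{e₁} = {F : det F = 1, |Fe₁| = 1}. Then M_{e₁} ∩ N_s = {R(I + γ e₁⊗e₂) : R ∈ SO(2), γ ∈ K_{s,1}}, where K_{s,1} = {0} if s = ±e₂, K_{s,1} = [−2s₁/s₂, 0] if s₁s₂ > 0, and K_{s,1} = [0, −2s₁/s₂] if s₁s₂ < 0. -/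
open Matrix Set

noncomputable section

/-- The constraint set `K_{s,1}`. -/
def Ks1 (s : Fin 2 → ℝ) : Set ℝ :=
  if s 0 = 0 then {0}
  else if 0 < s 0 * s 1 then Icc (-2 * s 0 / s 1) 0
  else Icc 0 (-2 * s 0 / s 1)

lemma aux_pos (s0 s1 γ : ℝ) (hp : 0 < s0*s1) :
    2*γ*s0*s1 + γ^2*s1^2 ≤ 0 ↔ (-2*s0/s1 ≤ γ ∧ γ ≤ 0) := by
  have hs1 : s1 ≠ 0 := by rintro rfl; simp at hp
  rcases hs1.lt_or_gt with h | h
  · have hs0 : s0 < 0 := by nlinarith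
    rw [div_le_iff_of_neg h]
    constructor
    · intro hk
      constructor <;> nlinarith [sq_nonneg (γ*s1), sq_nonneg (2*s0 + γ*s1)]
    · rintro ⟨h1, h2⟩
      have ha : 0 ≤ γ*s1 := by nlinarith [mul_nonneg (neg_nonneg.2 h2) (neg_nonneg.2 h.le)]
      nlinarith [mul_nonneg ha (by linarith : (0:ℝ) ≤ -(2*s0+γ*s1))]
  · have hs0 : 0 < s0 := by nlinarith
    rw [div_le_iff₀ h]
    constructor
    · intro hk
      constructor <;> nlinarith [sq_nonneg (γ*s1), sq_nonneg (2*s0 + γ*s1)]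
    · rintro ⟨h1, h2⟩
      have ha : γ*s1 ≤ 0 := mul_nonpos_of_nonpos_of_nonneg h2 h.le
      nlinarith [mul_nonpos_of_nonpos_of_nonneg ha (by linarith : (0:ℝ) ≤ 2*s0+γ*s1)]

lemma aux_neg (s0 s1 γ : ℝ) (hp : s0*s1 < 0) :
    2*γ*s0*s1 + γ^2*s1^2 ≤ 0 ↔ (0 ≤ γ ∧ γ ≤ -2*s0/s1) := by
  have hs1 : s1 ≠ 0 := by rintro rfl; simp at hp
  rcases hs1.lt_or_gt with h | h
  · have hs0 : 0 < s0 := by nlinarith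
    rw [le_div_iff_of_neg h]
    constructor
    · intro hk
      constructor <;> nlinarith [sq_nonneg (γ*s1), sq_nonneg (2*s0 + γ*s1)]
    · rintro ⟨h1, h2⟩
      have ha : γ*s1 ≤ 0 := mul_nonpos_of_nonneg_of_nonpos h1 h.le
      nlinarith [mul_nonpos_of_nonpos_of_nonneg ha (by linarith : (0:ℝ) ≤ 2*s0+γ*s1)]
  · have hs0 : s0 < 0 := by nlinarith
    rw [le_div_iff₀ h]
    constructor
    · intro hk
      constructor <;> nlinarith [sq_nonneg (γ*s1), sq_nonneg (2*s0 + γ*s1)]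
    · rintro ⟨h1, h2⟩
      have ha : 0 ≤ γ*s1 := mul_nonneg h1 h.le
      nlinarith [mul_nonneg ha (by linarith : (0:ℝ) ≤ -(2*s0+γ*s1))]

lemma oneE12 (γ : ℝ) : (1 : Matrix (Fin 2) (Fin 2) ℝ) + γ • E12 = !![1, γ; 0, 1] := by
  ext i j
  fin_cases i <;> fin_cases j <;>
    simp [E12, vecMulVec_apply, Matrix.one_apply]

lemma transpose2 (a b c d : ℝ) : (!![a,b;c,d])ᵀ = !![a,c;b,d] := by
  ext i j; fin_cases i <;> fin_cases j <;> simp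

/-- for a unit vector `s ≠ e₁` (the cases `s = ±e₂`, `s₁s₂ > 0`,
`s₁s₂ < 0`), `M_{e₁} ∩ N_s = {R(I + γ e₁⊗e₂) : R ∈ SO(2), γ ∈ K_{s,1}}`. -/
theorem stmt8 (s : Fin 2 → ℝ) (hs : sq2 s = 1) (hse1 : s ≠ ![1, 0])
    (hcase : s = ![0, 1] ∨ s = ![0, -1] ∨ s 0 * s 1 ≠ 0) :
    {F : Matrix (Fin 2) (Fin 2) ℝ | F.det = 1 ∧ sq2 (F *ᵥ ![1, 0]) = 1} ∩
      {F : Matrix (Fin 2) (Fin 2) ℝ | F.det = 1 ∧ sq2 (F *ᵥ s) ≤ 1} =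
    {F : Matrix (Fin 2) (Fin 2) ℝ |
      ∃ R, ∃ γ ∈ Ks1 s, SO2 R ∧ F = R * (1 + γ • E12)} := by
  have hsu : s 0 ^ 2 + s 1 ^ 2 = 1 := hs
  have hs1' : s 0 ≠ 0 → s 1 ≠ 0 := by
    rcases hcase with rfl | rfl | h
    · intro h; simp at h
    · intro h; simp at h
    · intro _; exact fun hz => h (by rw [hz, mul_zero])
  ext F
  simp only [mem_inter_iff, mem_setOf_eq]
  constructor
  · rintro ⟨⟨hdet, he1⟩, -, hns⟩
    have hdet' : F 0 0 * F 1 1 - F 0 1 * F 1 0 = 1 := by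
      rw [Matrix.det_fin_two] at hdet; linarith
    have h1 : F 0 0 ^ 2 + F 1 0 ^ 2 = 1 := by
      simpa [sq2, mulVec, dotProduct, Fin.sum_univ_two] using he1
    set g := F 0 0 * F 0 1 + F 1 0 * F 1 1 with hg
    have hb0 : F 0 1 = F 0 0 * g - F 1 0 := by
      rw [hg]; linear_combination (-(F 0 1)) * h1 - F 1 0 * hdet'
    have hb1 : F 1 1 = F 1 0 * g + F 0 0 := by
      rw [hg]; linear_combination (-(F 1 1)) * h1 + F 0 0 * hdet'
    have hF : F = !![F 0 0, -(F 1 0); F 1 0, F 0 0] * (1 + g • E12) := by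
      rw [oneE12, eta_fin_two F, Matrix.mul_fin_two]
      ext i j; fin_cases i <;> fin_cases j <;> simp [hb0, hb1] <;> linarith [h1]
    have hval : sq2 (F *ᵥ s) = (s 0 + g * s 1) ^ 2 + (s 1) ^ 2 := by
      simp only [sq2, mulVec, dotProduct, Fin.sum_univ_two]
      rw [hb0, hb1]
      linear_combination ((s 0 + g * s 1) ^ 2 + (s 1) ^ 2) * h1
    rw [hval] at hns
    have hkey : 2*g*(s 0)*(s 1) + g^2*(s 1)^2 ≤ 0 := by nlinarith [hns, hsu]
    refine ⟨!![F 0 0, -(F 1 0); F 1 0, F 0 0], g, ?_, ⟨?_, ?_⟩, hF⟩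
    · unfold Ks1
      split_ifs with h0 hsign
      · have hsq1 : (s 1) ^ 2 = 1 := by rw [h0] at hsu; linarith
        rw [h0] at hkey
        have hq : g ^ 2 = g ^ 2 * (s 1) ^ 2 := by rw [hsq1]; ring
        have hg2 : g ^ 2 = 0 := le_antisymm (by nlinarith [hkey, hq]) (sq_nonneg g)
        have : g = 0 := by
          have := sq_eq_zero_iff.mp hg2; exact this
        simp [this]
      · exact mem_Icc.mpr ((aux_pos (s 0) (s 1) g hsign).mp hkey)
      · have hneg : s 0 * s 1 < 0 :=
          lt_of_le_of_ne (not_lt.mp hsign) (mul_ne_zero h0 (hs1' h0))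
        exact mem_Icc.mpr ((aux_neg (s 0) (s 1) g hneg).mp hkey)
    · rw [transpose2, Matrix.mul_fin_two, Matrix.one_fin_two]
      ext i j; fin_cases i <;> fin_cases j <;> simp <;> linarith [h1]
    · rw [Matrix.det_fin_two_of]; linear_combination h1
  · rintro ⟨R, γ, hγ, ⟨hRO, hRdet⟩, rfl⟩
    have hRtR : Rᵀ * R = 1 := mul_eq_one_comm.mp hRO
    have c1 : R 0 0 ^ 2 + R 1 0 ^ 2 = 1 := by
      have := congrFun (congrFun hRtR 0) 0
      simp [Matrix.mul_apply, Fin.sum_univ_two, Matrix.one_apply] at this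
      nlinarith [this]
    have c2 : R 0 1 ^ 2 + R 1 1 ^ 2 = 1 := by
      have := congrFun (congrFun hRtR 1) 1
      simp [Matrix.mul_apply, Fin.sum_univ_two, Matrix.one_apply] at this
      nlinarith [this]
    have c3 : R 0 0 * R 0 1 + R 1 0 * R 1 1 = 0 := by
      have := congrFun (congrFun hRtR 0) 1
      simpa [Matrix.mul_apply, Fin.sum_univ_two, Matrix.one_apply] using this
    have hdetF : (R * (1 + γ • E12)).det = 1 := by
      rw [Matrix.det_mul, hRdet, oneE12, Matrix.det_fin_two_of]; norm_num
    have hsqs : sq2 ((R * (1 + γ • E12)) *ᵥ s) = (s 0 + γ * s 1) ^ 2 + (s 1) ^ 2 := by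
      rw [oneE12]
      simp [sq2, mulVec, dotProduct, Fin.sum_univ_two, Matrix.mul_apply]
      linear_combination ((s 0 + γ * s 1) ^ 2) * c1 + ((s 1) ^ 2) * c2 +
        (2 * (s 0 + γ * s 1) * (s 1)) * c3
    refine ⟨⟨hdetF, ?_⟩, hdetF, ?_⟩
    · rw [oneE12]
      simp [sq2, mulVec, dotProduct, Fin.sum_univ_two, Matrix.mul_apply]
      linear_combination c1
    · rw [hsqs]
      unfold Ks1 at hγ
      split_ifs at hγ with h0 hsign
      · simp only [mem_singleton_iff] at hγ
        rw [hγ, h0]; nlinarith [hsu, sq_nonneg (s 0)]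
      · have hkey := (aux_pos (s 0) (s 1) γ hsign).mpr (mem_Icc.mp hγ)
        nlinarith [hkey, hsu]
      · have hneg : s 0 * s 1 < 0 :=
          lt_of_le_of_ne (not_lt.mp hsign) (mul_ne_zero h0 (hs1' h0))
        have hkey := (aux_neg (s 0) (s 1) γ hneg).mpr (mem_Icc.mp hγ)
        nlinarith [hkey, hsu]
end
end

section
/- Let s be a unit vector, m = s^⊥, and N ∈ N_s \ M_s (i.e. det N = 1, |Ns| < 1). Set γ = √(|Nm|² − 1) and ζ = −γ. Then there exist rotations R, Q ∈ SO(2) and μ ∈ (0,1) such that F := R(I + γ s⊗m) and G := Q(I + ζ s⊗m) satisfy rank(F − G) = 1, N = μF + (1−μ)G, and |Nm| = |Fm| = |Gm|. -/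
open Matrix Set

noncomputable section

lemma rank_one_aux (M : Matrix (Fin 2) (Fin 2) ℝ) (h0 : M.det = 0) (hne : M ≠ 0) :
    M.rank = 1 := by
  have hker : ∃ v ≠ 0, M.mulVecLin v = 0 := by
    obtain ⟨v, hv1, hv2⟩ := (Matrix.exists_mulVec_eq_zero_iff).2 h0
    exact ⟨v, hv1, hv2⟩
  have hrpos : 0 < M.rank := by
    rw [Matrix.rank, Module.finrank_pos_iff_exists_ne_zero]
    obtain ⟨i, j, hij⟩ : ∃ i j, M i j ≠ 0 := by
      by_contra h; push_neg at h
      exact hne (by ext i j; simpa using h i j)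
    refine ⟨⟨M *ᵥ Pi.single j 1, ⟨Pi.single j 1, rfl⟩⟩, ?_⟩
    intro hc
    apply hij
    have := congrFun (congrArg Subtype.val hc) i
    simpa [Matrix.mulVec_single] using this
  have hsum := LinearMap.finrank_range_add_finrank_ker M.mulVecLin
  have hkpos : 0 < Module.finrank ℝ (LinearMap.ker M.mulVecLin) := by
    rw [Module.finrank_pos_iff_exists_ne_zero]
    obtain ⟨v, hv0, hv⟩ := hker
    exact ⟨⟨v, by simpa [LinearMap.mem_ker] using hv⟩, by simpa using hv0⟩
  have hfr : Module.finrank ℝ (Fin 2 → ℝ) = 2 := by simp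
  have : M.rank + Module.finrank ℝ (LinearMap.ker M.mulVecLin) = 2 := by
    rw [Matrix.rank]; rw [hfr] at hsum; exact hsum
  omega

lemma matrix_eq_of_mulVec (s : Fin 2 → ℝ) (hs : s 0 ^ 2 + s 1 ^ 2 = 1)
    (A B : Matrix (Fin 2) (Fin 2) ℝ)
    (h1 : A *ᵥ s = B *ᵥ s) (h2 : A *ᵥ perp s = B *ᵥ perp s) : A = B := by
  ext i j
  have e1 := congrFun h1 i
  have e2 := congrFun h2 i
  simp [Matrix.mulVec, dotProduct, Fin.sum_univ_two, perp] at e1 e2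
  fin_cases j
  · show A i 0 = B i 0
    linear_combination s 0 * e1 - s 1 * e2 - (A i 0 - B i 0) * hs
  · show A i 1 = B i 1
    linear_combination s 1 * e1 + s 0 * e2 - (A i 1 - B i 1) * hs

lemma det_mulVec (s : Fin 2 → ℝ) (hs : s 0 ^ 2 + s 1 ^ 2 = 1)
    (M : Matrix (Fin 2) (Fin 2) ℝ) :
    M.det = (M *ᵥ s) 0 * (M *ᵥ perp s) 1 - (M *ᵥ s) 1 * (M *ᵥ perp s) 0 := by
  simp [Matrix.det_fin_two, Matrix.mulVec, dotProduct, Fin.sum_univ_two, perp]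
  linear_combination (-(M 0 0 * M 1 1) + M 0 1 * M 1 0) * hs

lemma cancel_aux (x y : ℝ) (hy : y ≠ 0) : y * (x / y) = x := by field_simp

lemma so2_aux (c s' : ℝ) (h : c ^ 2 + s' ^ 2 = 1) : SO2 !![c, -s'; s', c] := by
  have ht : (!![c, -s'; s', c])ᵀ = !![c, s'; -s', c] := by
    ext i j; fin_cases i <;> fin_cases j <;> rfl
  constructor
  · rw [ht]
    ext i j
    fin_cases i <;> fin_cases j <;>
      simp [Matrix.mul_apply, Fin.sum_univ_two, Matrix.one_apply] <;>
      first
        | linear_combination h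
        | ring
  · rw [Matrix.det_fin_two]
    simp
    linear_combination h

set_option maxHeartbeats 4000000 in
/-- every `N ∈ N_s \ M_s` (`det N = 1`, `|Ns| < 1`) is a rank-one
convex combination `N = μF + (1−μ)G` of `F = R(I + γ s⊗m)`, `G = Q(I − γ s⊗m)`
in `M_s` with `γ = √(|Nm|² − 1)` and `|Nm| = |Fm| = |Gm|`. -/
theorem stmt12 (s : Fin 2 → ℝ) (hs : sq2 s = 1)
    (N : Matrix (Fin 2) (Fin 2) ℝ) (hNdet : N.det = 1) (hNs : sq2 (N *ᵥ s) < 1)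
    (γ ζ : ℝ) (hγ : γ = Real.sqrt (sq2 (N *ᵥ perp s) - 1)) (hζ : ζ = -γ) :
    ∃ R Q : Matrix (Fin 2) (Fin 2) ℝ, ∃ μ ∈ Ioo (0 : ℝ) 1,
      SO2 R ∧ SO2 Q ∧
      ∀ F G : Matrix (Fin 2) (Fin 2) ℝ,
        F = R * (1 + γ • vecMulVec s (perp s)) →
        G = Q * (1 + ζ • vecMulVec s (perp s)) →
        (F - G).rank = 1 ∧ N = μ • F + (1 - μ) • G ∧
        sq2 (N *ᵥ perp s) = sq2 (F *ᵥ perp s) ∧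
        sq2 (N *ᵥ perp s) = sq2 (G *ᵥ perp s) := by
  subst hζ
  have hs' : s 0 ^ 2 + s 1 ^ 2 = 1 := hs
  obtain ⟨a0, ha0⟩ : ∃ x : ℝ, x = N 0 0 * s 0 + N 0 1 * s 1 := ⟨_, rfl⟩
  obtain ⟨a1, ha1⟩ : ∃ x : ℝ, x = N 1 0 * s 0 + N 1 1 * s 1 := ⟨_, rfl⟩
  obtain ⟨b0, hb0⟩ : ∃ x : ℝ, x = -(N 0 0 * s 1) + N 0 1 * s 0 := ⟨_, rfl⟩
  obtain ⟨b1, hb1⟩ : ∃ x : ℝ, x = -(N 1 0 * s 1) + N 1 1 * s 0 := ⟨_, rfl⟩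
  have hNsv : N *ᵥ s = ![a0, a1] := by
    funext i
    fin_cases i <;>
      simp [Matrix.mulVec, dotProduct, Fin.sum_univ_two] <;>
      [linear_combination -ha0; linear_combination -ha1]
  have hNmv : N *ᵥ perp s = ![b0, b1] := by
    funext i
    fin_cases i <;>
      simp [Matrix.mulVec, dotProduct, Fin.sum_univ_two, perp] <;>
      [linear_combination -hb0; linear_combination -hb1]
  have hA : a0 ^ 2 + a1 ^ 2 < 1 := by
    rw [hNsv] at hNs; simpa [sq2] using hNs
  rw [Matrix.det_fin_two] at hNdet
  have hdet' : a0 * b1 - a1 * b0 = 1 := by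
    rw [ha0, ha1, hb0, hb1]
    linear_combination (N 0 0 * N 1 1 - N 0 1 * N 1 0) * hs' + hNdet
  have hlag : 1 + (a0 * b0 + a1 * b1) ^ 2 = (a0 ^ 2 + a1 ^ 2) * (b0 ^ 2 + b1 ^ 2) := by
    linear_combination -(a0 * b1 - a1 * b0 + 1) * hdet'
  have hB1 : 1 < b0 ^ 2 + b1 ^ 2 := by
    nlinarith [hlag, hA, sq_nonneg a0, sq_nonneg a1, sq_nonneg (a0 * b0 + a1 * b1),
      sq_nonneg b0, sq_nonneg b1]
  have hγ'' : γ = Real.sqrt (b0 ^ 2 + b1 ^ 2 - 1) := by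
    rw [hγ, hNmv]; simp [sq2]
  have hγpos : 0 < γ := by
    rw [hγ'']; exact Real.sqrt_pos.mpr (by linarith)
  have hγ2 : γ ^ 2 = b0 ^ 2 + b1 ^ 2 - 1 := by
    rw [hγ'']; exact Real.sq_sqrt (by linarith)
  have hγne : γ ≠ 0 := ne_of_gt hγpos
  obtain ⟨c0, hc0⟩ : ∃ x : ℝ, x = (b0 + a1) / γ := ⟨_, rfl⟩
  obtain ⟨c1, hc1⟩ : ∃ x : ℝ, x = (b1 - a0) / γ := ⟨_, rfl⟩
  have hc0' : γ * c0 = b0 + a1 := by rw [hc0]; exact cancel_aux _ _ hγne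
  have hc1' : γ * c1 = b1 - a0 := by rw [hc1]; exact cancel_aux _ _ hγne
  obtain ⟨S, hSdef⟩ : ∃ x : ℝ, x = a0 ^ 2 + a1 ^ 2 + c0 ^ 2 + c1 ^ 2 := ⟨_, rfl⟩
  obtain ⟨t, htdef⟩ : ∃ x : ℝ, x = a0 * c0 + a1 * c1 := ⟨_, rfl⟩
  have htγ : t * γ = a0 * b0 + a1 * b1 := by
    rw [htdef]; linear_combination a0 * hc0' + a1 * hc1'
  have hCγ : (c0 ^ 2 + c1 ^ 2) * γ ^ 2 = (b0 + a1) ^ 2 + (b1 - a0) ^ 2 := by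
    linear_combination (γ * c0 + b0 + a1) * hc0' + (γ * c1 + b1 - a0) * hc1'
  have hT : t ^ 2 = S - 1 := by
    have key : t ^ 2 * γ ^ 2 = (S - 1) * γ ^ 2 := by
      rw [hSdef]
      linear_combination (t * γ + a0 * b0 + a1 * b1) * htγ - hCγ -
        (a0 ^ 2 + a1 ^ 2 - 1) * hγ2 - (a0 * b1 - a1 * b0 - 1) * hdet'
    exact mul_right_cancel₀ (pow_ne_zero 2 hγne) key
  have hS2 : (S - 2) * γ ^ 2 = (a0 ^ 2 + a1 ^ 2 - 1) * (γ ^ 2 + 1) := by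
    rw [hSdef]
    linear_combination hCγ - hγ2 - 2 * hdet'
  have hSlt : S < 2 := by nlinarith [sq_nonneg γ]
  have hsum1 : S + 2 * t = (a0 + c0) ^ 2 + (a1 + c1) ^ 2 := by
    rw [hSdef, htdef]; ring
  have hsum2 : S - 2 * t = (a0 - c0) ^ 2 + (a1 - c1) ^ 2 := by
    rw [hSdef, htdef]; ring
  have hxnn : 0 ≤ S + 2 * t := by rw [hsum1]; positivity
  have hynn : 0 ≤ S - 2 * t := by rw [hsum2]; positivity
  have hprod : (S + 2 * t) * (S - 2 * t) = (S - 2) ^ 2 := by linear_combination (-4) * hT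
  have hppos : 0 < (S + 2 * t) * (S - 2 * t) := by
    rw [hprod]
    exact pow_two_pos_of_ne_zero (by linarith)
  have hxpos : 0 < S + 2 * t := by
    rcases lt_or_eq_of_le hxnn with h | h
    · exact h
    · rw [← h, zero_mul] at hppos; exact absurd hppos (lt_irrefl 0)
  have hypos : 0 < S - 2 * t := by
    rcases lt_or_eq_of_le hynn with h | h
    · exact h
    · rw [← h, mul_zero] at hppos; exact absurd hppos (lt_irrefl 0)
  obtain ⟨μ, hμdef⟩ : ∃ x : ℝ, x = Real.sqrt (S + 2 * t) / 2 := ⟨_, rfl⟩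
  obtain ⟨ν, hνdef⟩ : ∃ x : ℝ, x = Real.sqrt (S - 2 * t) / 2 := ⟨_, rfl⟩
  have hμpos : 0 < μ := by rw [hμdef]; positivity
  have hνpos : 0 < ν := by rw [hνdef]; positivity
  have h4μ : 4 * μ ^ 2 = S + 2 * t := by
    rw [hμdef, div_pow, Real.sq_sqrt hxnn]; ring
  have h4ν : 4 * ν ^ 2 = S - 2 * t := by
    rw [hνdef, div_pow, Real.sq_sqrt hynn]; ring
  have hμν : μ * ν = (2 - S) / 4 := by
    rw [hμdef, hνdef, div_mul_div_comm, ← Real.sqrt_mul hxnn, hprod,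
      show (S - 2) ^ 2 = (2 - S) ^ 2 by ring, Real.sqrt_sq (by linarith : (0:ℝ) ≤ 2 - S)]
    norm_num
  have hμν1 : μ + ν = 1 := by
    have h1 : (μ + ν) ^ 2 = 1 := by linear_combination h4μ / 4 + h4ν / 4 + 2 * hμν
    have h2 : (μ + ν - 1) * (μ + ν + 1) = 0 := by linear_combination h1
    rcases mul_eq_zero.1 h2 with h | h
    · linarith
    · linarith
  have hμlt1 : μ < 1 := by linarith
  obtain ⟨r0, hr0def⟩ : ∃ x : ℝ, x = (a0 + c0) / (2 * μ) := ⟨_, rfl⟩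
  obtain ⟨r1, hr1def⟩ : ∃ x : ℝ, x = (a1 + c1) / (2 * μ) := ⟨_, rfl⟩
  obtain ⟨q0, hq0def⟩ : ∃ x : ℝ, x = (a0 - c0) / (2 * ν) := ⟨_, rfl⟩
  obtain ⟨q1, hq1def⟩ : ∃ x : ℝ, x = (a1 - c1) / (2 * ν) := ⟨_, rfl⟩
  have hμne : μ ≠ 0 := ne_of_gt hμpos
  have hνne : ν ≠ 0 := ne_of_gt hνpos
  have hr0 : 2 * μ * r0 = a0 + c0 := by rw [hr0def]; exact cancel_aux _ _ (by positivity)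
  have hr1 : 2 * μ * r1 = a1 + c1 := by rw [hr1def]; exact cancel_aux _ _ (by positivity)
  have hq0 : 2 * ν * q0 = a0 - c0 := by rw [hq0def]; exact cancel_aux _ _ (by positivity)
  have hq1 : 2 * ν * q1 = a1 - c1 := by rw [hq1def]; exact cancel_aux _ _ (by positivity)
  have hrunit : r0 ^ 2 + r1 ^ 2 = 1 := by
    have key : (r0 ^ 2 + r1 ^ 2) * (4 * μ ^ 2) = 1 * (4 * μ ^ 2) := by
      linear_combination (2 * μ * r0 + a0 + c0) * hr0 + (2 * μ * r1 + a1 + c1) * hr1 -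
        hsum1 - h4μ
    exact mul_right_cancel₀ (by positivity) key
  have hqunit : q0 ^ 2 + q1 ^ 2 = 1 := by
    have key : (q0 ^ 2 + q1 ^ 2) * (4 * ν ^ 2) = 1 * (4 * ν ^ 2) := by
      linear_combination (2 * ν * q0 + a0 - c0) * hq0 + (2 * ν * q1 + a1 - c1) * hq1 -
        hsum2 - h4ν
    exact mul_right_cancel₀ (by positivity) key
  have hdetrq : γ * (r0 * q1 - r1 * q0) - (r0 * q0 + r1 * q1) + 1 = 0 := by
    have e01 : (2 * μ * r0) * (2 * ν * q1) = (a0 + c0) * (a1 - c1) := by rw [hr0, hq1]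
    have e10 : (2 * μ * r1) * (2 * ν * q0) = (a1 + c1) * (a0 - c0) := by rw [hr1, hq0]
    have e00 : (2 * μ * r0) * (2 * ν * q0) = (a0 + c0) * (a0 - c0) := by rw [hr0, hq0]
    have e11 : (2 * μ * r1) * (2 * ν * q1) = (a1 + c1) * (a1 - c1) := by rw [hr1, hq1]
    have key : (γ * (r0 * q1 - r1 * q0) - (r0 * q0 + r1 * q1) + 1) * (4 * μ * ν) = 0 := by
      linear_combination γ * e01 - γ * e10 - e00 - e11 + 4 * hμν + 2 * a1 * hc0' -
        2 * a0 * hc1' - 2 * hdet' - hSdef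
    have h4 : (4 : ℝ) * μ * ν ≠ 0 := by positivity
    exact (mul_eq_zero.1 key).resolve_right h4
  -- rotation matrices
  obtain ⟨cR, hcR⟩ : ∃ x : ℝ, x = r0 * s 0 + r1 * s 1 := ⟨_, rfl⟩
  obtain ⟨sR, hsR⟩ : ∃ x : ℝ, x = r1 * s 0 - r0 * s 1 := ⟨_, rfl⟩
  obtain ⟨cQ, hcQ⟩ : ∃ x : ℝ, x = q0 * s 0 + q1 * s 1 := ⟨_, rfl⟩
  obtain ⟨sQ, hsQ⟩ : ∃ x : ℝ, x = q1 * s 0 - q0 * s 1 := ⟨_, rfl⟩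
  have hcsR : cR ^ 2 + sR ^ 2 = 1 := by
    rw [hcR, hsR]
    linear_combination (s 0 ^ 2 + s 1 ^ 2) * hrunit + hs'
  have hcsQ : cQ ^ 2 + sQ ^ 2 = 1 := by
    rw [hcQ, hsQ]
    linear_combination (s 0 ^ 2 + s 1 ^ 2) * hqunit + hs'
  refine ⟨!![cR, -sR; sR, cR], !![cQ, -sQ; sQ, cQ], μ,
    Set.mem_Ioo.mpr ⟨hμpos, hμlt1⟩, so2_aux cR sR hcsR, so2_aux cQ sQ hcsQ, ?_⟩
  intro F G hF hG
  subst hF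
  subst hG
  have hM1 : (1 : Matrix (Fin 2) (Fin 2) ℝ) + γ • vecMulVec s (perp s) =
      !![1 - γ * (s 0 * s 1), γ * s 0 ^ 2; -(γ * s 1 ^ 2), 1 + γ * (s 0 * s 1)] := by
    ext i j
    fin_cases i <;> fin_cases j <;>
      simp [Matrix.vecMulVec_apply, perp, Matrix.one_apply, -mul_eq_mul_left_iff] <;> ring
  have hM2 : (1 : Matrix (Fin 2) (Fin 2) ℝ) + (-γ) • vecMulVec s (perp s) =
      !![1 + γ * (s 0 * s 1), -(γ * s 0 ^ 2); γ * s 1 ^ 2, 1 - γ * (s 0 * s 1)] := by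
    ext i j
    fin_cases i <;> fin_cases j <;>
      simp [Matrix.vecMulVec_apply, perp, Matrix.one_apply, -mul_eq_mul_left_iff] <;> ring
  have hFmat : !![cR, -sR; sR, cR] * ((1 : Matrix (Fin 2) (Fin 2) ℝ) + γ • vecMulVec s (perp s)) =
      !![cR * (1 - γ * (s 0 * s 1)) + sR * (γ * s 1 ^ 2),
         cR * (γ * s 0 ^ 2) - sR * (1 + γ * (s 0 * s 1));
         sR * (1 - γ * (s 0 * s 1)) - cR * (γ * s 1 ^ 2),
         sR * (γ * s 0 ^ 2) + cR * (1 + γ * (s 0 * s 1))] := by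
    rw [hM1]
    ext i j
    fin_cases i <;> fin_cases j <;>
      simp [Matrix.mul_apply, Fin.sum_univ_two] <;> ring
  have hGmat : !![cQ, -sQ; sQ, cQ] * ((1 : Matrix (Fin 2) (Fin 2) ℝ) + (-γ) • vecMulVec s (perp s)) =
      !![cQ * (1 + γ * (s 0 * s 1)) - sQ * (γ * s 1 ^ 2),
         -(cQ * (γ * s 0 ^ 2)) - sQ * (1 - γ * (s 0 * s 1));
         sQ * (1 + γ * (s 0 * s 1)) + cQ * (γ * s 1 ^ 2),
         -(sQ * (γ * s 0 ^ 2)) + cQ * (1 - γ * (s 0 * s 1))] := by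
    rw [hM2]
    ext i j
    fin_cases i <;> fin_cases j <;>
      simp [Matrix.mul_apply, Fin.sum_univ_two] <;> ring
  have hFs : (!![cR, -sR; sR, cR] * (1 + γ • vecMulVec s (perp s))) *ᵥ s = ![r0, r1] := by
    rw [hFmat]
    funext i
    fin_cases i <;>
      simp [Matrix.mulVec, dotProduct, Fin.sum_univ_two]
    · linear_combination s 0 * hcR - s 1 * hsR + r0 * hs'
    · linear_combination s 1 * hcR + s 0 * hsR + r1 * hs'
  have hGs : (!![cQ, -sQ; sQ, cQ] * (1 + (-γ) • vecMulVec s (perp s))) *ᵥ s = ![q0, q1] := by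
    rw [hGmat]
    funext i
    fin_cases i <;>
      simp [Matrix.mulVec, dotProduct, Fin.sum_univ_two]
    · linear_combination s 0 * hcQ - s 1 * hsQ + q0 * hs'
    · linear_combination s 1 * hcQ + s 0 * hsQ + q1 * hs'
  have hFm : (!![cR, -sR; sR, cR] * (1 + γ • vecMulVec s (perp s))) *ᵥ perp s =
      ![-r1 + γ * r0, r0 + γ * r1] := by
    rw [hFmat]
    funext i
    fin_cases i <;>
      simp [Matrix.mulVec, dotProduct, Fin.sum_univ_two, perp]
    · linear_combination (-(s 1) + γ * (s 0 ^ 2 + s 1 ^ 2) * s 0) * hcR -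
        (s 0 + γ * (s 0 ^ 2 + s 1 ^ 2) * s 1) * hsR +
        (-r1 + γ * r0 * (s 0 ^ 2 + s 1 ^ 2 + 1)) * hs'
    · linear_combination (s 0 + γ * (s 0 ^ 2 + s 1 ^ 2) * s 1) * hcR +
        (-(s 1) + γ * (s 0 ^ 2 + s 1 ^ 2) * s 0) * hsR +
        (r0 + γ * r1 * (s 0 ^ 2 + s 1 ^ 2 + 1)) * hs'
  have hGm : (!![cQ, -sQ; sQ, cQ] * (1 + (-γ) • vecMulVec s (perp s))) *ᵥ perp s =
      ![-q1 - γ * q0, q0 - γ * q1] := by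
    rw [hGmat]
    funext i
    fin_cases i <;>
      simp [Matrix.mulVec, dotProduct, Fin.sum_univ_two, perp]
    · linear_combination (-(s 1) - γ * (s 0 ^ 2 + s 1 ^ 2) * s 0) * hcQ -
        (s 0 - γ * (s 0 ^ 2 + s 1 ^ 2) * s 1) * hsQ +
        (-q1 - γ * q0 * (s 0 ^ 2 + s 1 ^ 2 + 1)) * hs'
    · linear_combination (s 0 - γ * (s 0 ^ 2 + s 1 ^ 2) * s 1) * hcQ +
        (-(s 1) - γ * (s 0 ^ 2 + s 1 ^ 2) * s 0) * hsQ +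
        (q0 - γ * q1 * (s 0 ^ 2 + s 1 ^ 2 + 1)) * hs'
  refine ⟨?_, ?_, ?_, ?_⟩
  · -- rank
    apply rank_one_aux
    · rw [det_mulVec s hs', Matrix.sub_mulVec, Matrix.sub_mulVec, hFs, hGs, hFm, hGm]
      simp
      linear_combination 2 * hdetrq + hrunit + hqunit
    · intro h
      have h1 : (![r0, r1] - ![q0, q1] : Fin 2 → ℝ) = 0 := by
        rw [← hFs, ← hGs, ← Matrix.sub_mulVec, h, Matrix.zero_mulVec]
      have h2 : (![-r1 + γ * r0, r0 + γ * r1] - ![-q1 - γ * q0, q0 - γ * q1] : Fin 2 → ℝ)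
          = 0 := by
        rw [← hFm, ← hGm, ← Matrix.sub_mulVec, h, Matrix.zero_mulVec]
      have c1 : r0 - q0 = 0 := by simpa using congrFun h1 0
      have c2 : r1 - q1 = 0 := by simpa using congrFun h1 1
      have c3 : (-r1 + γ * r0) - (-q1 - γ * q0) = 0 := by simpa using congrFun h2 0
      have c4 : (r0 + γ * r1) - (q0 - γ * q1) = 0 := by simpa using congrFun h2 1
      have h20 : γ * (2 * r0) = 0 := by linear_combination c3 + γ * c1 + c2
      have h21 : γ * (2 * r1) = 0 := by linear_combination c4 - c1 + γ * c2
      have hr0z : r0 = 0 := by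
        rcases mul_eq_zero.1 h20 with h' | h'
        · exact absurd h' hγne
        · linarith
      have hr1z : r1 = 0 := by
        rcases mul_eq_zero.1 h21 with h' | h'
        · exact absurd h' hγne
        · linarith
      rw [hr0z, hr1z] at hrunit
      norm_num at hrunit
  · -- convex combination
    apply matrix_eq_of_mulVec s hs'
    · rw [Matrix.add_mulVec, Matrix.smul_mulVec, Matrix.smul_mulVec,
        hFs, hGs, hNsv]
      funext i
      fin_cases i <;> simp [smul_eq_mul]
      · linear_combination -(hr0 + hq0) / 2 + q0 * hμν1
      · linear_combination -(hr1 + hq1) / 2 + q1 * hμν1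
    · rw [Matrix.add_mulVec, Matrix.smul_mulVec, Matrix.smul_mulVec,
        hFm, hGm, hNmv]
      funext i
      fin_cases i <;> simp [smul_eq_mul]
      · linear_combination (hr1 + hq1) / 2 - (γ / 2) * hr0 + (γ / 2) * hq0 - hc0' -
          (q1 + γ * q0) * hμν1
      · linear_combination -(hr0 + hq0) / 2 - (γ / 2) * hr1 + (γ / 2) * hq1 - hc1' +
          (q0 - γ * q1) * hμν1
  · rw [hNmv, hFm]
    simp [sq2]
    linear_combination -(1 + γ ^ 2) * hrunit - hγ2
  · rw [hNmv, hGm]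
    simp [sq2]
    linear_combination -(1 + γ ^ 2) * hqunit - hγ2
end
end

section
/- Let Q = (0,l)² and u ∈ W^{1,2}(Q; ℝ²) with ∇u = R(I + γ e₁⊗e₂) a.e., where R : Q → SO(2) is measurable and γ ∈ L²(Q). If additionally R is independent of x₁ (∂₁R = 0 distributionally) and R ∈ W^{1,2}(Q; ℝ^{2×2}), then the distributional derivative ∂₁γ vanishes and ∂₂(Re₁) = 0; consequently R is a constant rotation. -/
open Matrix Set
open Topology Filter

noncomputable section

lemma vec_eta (x : Fin 2 → ℝ) : ![x 0, x 1] = x := by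
  funext i; fin_cases i <;> rfl

lemma mulVec_e1 (A : Matrix (Fin 2) (Fin 2) ℝ) (g : ℝ) :
    (A * (1 + g • E12)) *ᵥ ![1, 0] = A *ᵥ ![1, 0] := by
  funext i
  simp [Matrix.mulVec, Matrix.mul_apply, dotProduct, E12, vecMulVec,
    Fin.sum_univ_two, Matrix.one_apply]

lemma mulVec_e2 (A : Matrix (Fin 2) (Fin 2) ℝ) (g : ℝ) :
    (A * (1 + g • E12)) *ᵥ ![0, 1] = g • (A *ᵥ ![1, 0]) + A *ᵥ ![0, 1] := by
  funext i
  simp [Matrix.mulVec, Matrix.mul_apply, dotProduct, E12, vecMulVec,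
    Fin.sum_univ_two, Matrix.one_apply]
  fin_cases i <;> simp <;> ring

lemma so2_col_unit {A : Matrix (Fin 2) (Fin 2) ℝ} (h : SO2 A) :
    (A 0 0)^2 + (A 1 0)^2 = 1 := by
  obtain ⟨h1, h2⟩ := h
  have h1' : Aᵀ * A = 1 := by rwa [mul_eq_one_comm] at h1
  have := congrFun (congrFun h1' 0) 0
  simp [Matrix.mul_apply, Fin.sum_univ_two, Matrix.one_apply] at this
  nlinarith [this]

lemma so2_eta {A : Matrix (Fin 2) (Fin 2) ℝ} (h : SO2 A) :
    A = ![![A 0 0, -(A 1 0)], ![A 1 0, A 0 0]] := by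
  obtain ⟨h1, h2⟩ := h
  have e00 := congrFun (congrFun h1 0) 0
  have e01 := congrFun (congrFun h1 0) 1
  have e11 := congrFun (congrFun h1 1) 1
  simp [Matrix.mul_apply, Fin.sum_univ_two, Matrix.one_apply, Matrix.transpose_apply] at e00 e01 e11
  rw [Matrix.det_fin_two] at h2
  funext i j
  fin_cases i <;> fin_cases j <;> simp <;>
    nlinarith [e00, e01, e11, h2, sq_nonneg (A 1 1 - A 0 0), sq_nonneg (A 0 1 + A 1 0)]

lemma hasDerivAt_path (a t : ℝ) :
    HasDerivAt (fun s : ℝ => (![a, s] : Fin 2 → ℝ)) ![0, 1] t := by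
  rw [hasDerivAt_pi]
  intro i; fin_cases i
  · simpa using hasDerivAt_const t a
  · simpa using hasDerivAt_id' t

lemma hasDerivAt_path' (b t : ℝ) :
    HasDerivAt (fun s : ℝ => (![s, b] : Fin 2 → ℝ)) ![1, 0] t := by
  rw [hasDerivAt_pi]
  intro i; fin_cases i
  · simpa using hasDerivAt_id' t
  · simpa using hasDerivAt_const t b

lemma const_of_hasDerivAt_zero {F : Type*} [NormedAddCommGroup F] [NormedSpace ℝ F]
    {f : ℝ → F} {s : Set ℝ} (hs : Convex ℝ s)
    (hf : ∀ t ∈ s, HasDerivAt f 0 t) {x y : ℝ} (hx : x ∈ s) (hy : y ∈ s) : f x = f y := by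
  have h := hs.norm_image_sub_le_of_norm_hasFDerivWithin_le
    (f' := fun _ => (0 : ℝ →L[ℝ] F)) (C := 0)
    (fun t ht => by
      have := (hf t ht).hasFDerivAt
      have h0 : (ContinuousLinearMap.toSpanSingleton ℝ (0 : F)) = 0 := by
        ext
        simp
      rw [h0] at this
      exact this.hasFDerivWithinAt)
    (fun t ht => by simp) hy hx
  rw [zero_mul, norm_le_zero_iff, sub_eq_zero] at h
  exact h

/-- on the square `Q = (0,l)²`, if `∇u = R(I + γ e₁⊗e₂)` with
`R : Q → SO(2)` independent of `x₁` and (Sobolev-)differentiable, then `γ` is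
independent of `x₁`, `∂₂(Re₁) = 0`, and consequently `R` is a constant rotation. -/
theorem stmt14 (l : ℝ) (hl : 0 < l)
    (Q : Set (Fin 2 → ℝ)) (hQ : Q = {x | x 0 ∈ Ioo 0 l ∧ x 1 ∈ Ioo 0 l})
    (u : (Fin 2 → ℝ) → (Fin 2 → ℝ))
    (R : (Fin 2 → ℝ) → Matrix (Fin 2) (Fin 2) ℝ)
    (γ : (Fin 2 → ℝ) → ℝ)
    (hgrad : ∀ x ∈ Q, HasFDerivAt u
      ((R x * (1 + γ x • E12)).mulVecLin.toContinuousLinearMap) x)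
    (hSO : ∀ x ∈ Q, SO2 (R x))
    (hRx1 : ∀ x ∈ Q, ∀ y ∈ Q, x 1 = y 1 → R x = R y)
    (hRdiff : ∀ x ∈ Q, ∀ i j : Fin 2, DifferentiableAt ℝ (fun z => R z i j) x) :
    (∀ x ∈ Q, ∀ y ∈ Q, x 1 = y 1 → γ x = γ y) ∧
    (∀ x ∈ Q, fderiv ℝ (fun z => (R z) *ᵥ ![1, 0]) x (Pi.single 1 1) = 0) ∧
    (∃ R₀ : Matrix (Fin 2) (Fin 2) ℝ, SO2 R₀ ∧ ∀ x ∈ Q, R x = R₀) := by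
  set m : ℝ := l / 2 with hmdef
  have hm : m ∈ Ioo (0:ℝ) l := ⟨by simp [hmdef]; linarith, by simp [hmdef]; linarith⟩
  have hm4 : l / 4 ∈ Ioo (0:ℝ) l := ⟨by linarith, by linarith⟩
  have hmemQ : ∀ a t : ℝ, a ∈ Ioo 0 l → t ∈ Ioo 0 l → ![a, t] ∈ Q := by
    intro a t ha ht
    rw [hQ]
    refine ⟨by simpa using ha, by simpa using ht⟩
  have hQopen : IsOpen Q := by
    rw [hQ]
    exact (isOpen_Ioo.preimage (continuous_apply 0)).inter
      (isOpen_Ioo.preimage (continuous_apply 1))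
  -- the first column of R, as a function of the second coordinate only
  set v : ℝ → (Fin 2 → ℝ) := fun t => R ![m, t] *ᵥ ![1, 0] with hvdef
  have hvc : ∀ (t : ℝ) (i : Fin 2), v t i = R ![m, t] i 0 := by
    intro t i
    simp [hvdef, Matrix.mulVec, dotProduct, Fin.sum_univ_two]
    fin_cases i <;> rfl
  -- derivative of horizontal paths
  have key1 : ∀ t ∈ Ioo (0:ℝ) l, ∀ s ∈ Ioo (0:ℝ) l,
      HasDerivAt (fun s' => u ![s', t]) (v t) s := by
    intro t ht s hs
    have hmem : ![s, t] ∈ Q := hmemQ s t hs ht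
    have h := (hgrad _ hmem).comp_hasDerivAt s (hasDerivAt_path' t s)
    have hR : R ![s, t] = R ![m, t] := hRx1 _ hmem _ (hmemQ m t hm ht) (by simp)
    refine h.congr_deriv ?_
    simp only [LinearMap.coe_toContinuousLinearMap', Matrix.mulVecLin_apply]
    rw [mulVec_e1, hR, hvdef]
  -- derivative of vertical paths
  have key2 : ∀ a ∈ Ioo (0:ℝ) l, ∀ t ∈ Ioo (0:ℝ) l,
      HasDerivAt (fun s => u ![a, s])
        (γ ![a, t] • v t + R ![m, t] *ᵥ ![0, 1]) t := by
    intro a ha t ht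
    have hmem : ![a, t] ∈ Q := hmemQ a t ha ht
    have h := (hgrad _ hmem).comp_hasDerivAt t (hasDerivAt_path a t)
    have hR : R ![a, t] = R ![m, t] := hRx1 _ hmem _ (hmemQ m t hm ht) (by simp)
    refine h.congr_deriv ?_
    simp only [LinearMap.coe_toContinuousLinearMap', Matrix.mulVecLin_apply]
    rw [mulVec_e2, hR, hvdef]
  -- v is differentiable
  have hvdiff : ∀ t ∈ Ioo (0:ℝ) l, DifferentiableAt ℝ v t := by
    intro t ht
    rw [differentiableAt_pi]
    intro i
    have h := (hRdiff _ (hmemQ m t hm ht) i 0).comp t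
      (hasDerivAt_path m t).differentiableAt
    have : (fun s : ℝ => v s i) = fun s : ℝ => R ![m, s] i 0 := by
      funext s; exact hvc s i
    rw [this]
    exact h
  have hvD : ∀ t ∈ Ioo (0:ℝ) l, HasDerivAt v (deriv v t) t :=
    fun t ht => (hvdiff t ht).hasDerivAt
  -- representation u(a,t) = a • v t + c t
  have hrep : ∀ a ∈ Ioo (0:ℝ) l, ∀ t ∈ Ioo (0:ℝ) l,
      u ![a, t] - a • v t = u ![m, t] - m • v t := by
    intro a ha t ht
    refine const_of_hasDerivAt_zero (f := fun s => u ![s, t] - s • v t)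
      (convex_Ioo 0 l) ?_ ha hm
    intro s hs
    have h2 : HasDerivAt (fun s : ℝ => s • v t) (v t) s := by
      simpa using (hasDerivAt_id s).smul_const (v t)
    have h := (key1 t ht s hs).sub h2
    rw [sub_self] at h; exact h
  -- the key identity from equality of derivatives
  have heq : ∀ b ∈ Ioo (0:ℝ) l, ∀ a ∈ Ioo (0:ℝ) l,
      γ ![a, b] • v b + R ![m, b] *ᵥ ![0, 1]
        = a • deriv v b + deriv (fun t => u ![m, t] - m • v t) b := by
    intro b hb a ha
    have hdc : DifferentiableAt ℝ (fun t => u ![m, t] - m • v t) b :=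
      ((key2 m hm b hb).differentiableAt).sub ((hvdiff b hb).const_smul m)
    have hrhs : HasDerivAt (fun t => a • v t + (u ![m, t] - m • v t))
        (a • deriv v b + deriv (fun t => u ![m, t] - m • v t) b) b :=
      ((hvD b hb).const_smul a).add hdc.hasDerivAt
    have hev : (fun t => u ![a, t]) =ᶠ[𝓝 b]
        (fun t => a • v t + (u ![m, t] - m • v t)) := by
      filter_upwards [isOpen_Ioo.mem_nhds hb] with t ht
      have h := hrep a ha t ht
      rw [← h]; abel
    have hd1 : HasDerivAt (fun t => u ![a, t])
        (a • deriv v b + deriv (fun t => u ![m, t] - m • v t) b) b :=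
      hrhs.congr_of_eventuallyEq hev
    exact (key2 a ha b hb).unique hd1
  -- subtracting two instances
  have hsub : ∀ b ∈ Ioo (0:ℝ) l, ∀ a₁ ∈ Ioo (0:ℝ) l, ∀ a₂ ∈ Ioo (0:ℝ) l,
      (γ ![a₁, b] - γ ![a₂, b]) • v b = (a₁ - a₂) • deriv v b := by
    intro b hb a₁ h₁ a₂ h₂
    have e1 := heq b hb a₁ h₁
    have e2 := heq b hb a₂ h₂
    have h3 : (γ ![a₁, b] • v b + R ![m, b] *ᵥ ![0, 1])
        - (γ ![a₂, b] • v b + R ![m, b] *ᵥ ![0, 1])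
        = (a₁ • deriv v b + deriv (fun t => u ![m, t] - m • v t) b)
        - (a₂ • deriv v b + deriv (fun t => u ![m, t] - m • v t) b) := by
      rw [e1, e2]
    rw [sub_smul, sub_smul]
    simpa only [add_sub_add_right_eq_sub] using h3
  -- unit norm of v
  have hv1 : ∀ t ∈ Ioo (0:ℝ) l, (v t 0) ^ 2 + (v t 1) ^ 2 = 1 := by
    intro t ht
    have h := so2_col_unit (hSO _ (hmemQ m t hm ht))
    rw [hvc t 0, hvc t 1]
    exact h
  -- orthogonality v ⊥ v'
  have horth : ∀ b ∈ Ioo (0:ℝ) l,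
      v b 0 * deriv v b 0 + v b 1 * deriv v b 1 = 0 := by
    intro b hb
    have h0 : HasDerivAt (fun t => v t 0) (deriv v b 0) b :=
      (hasDerivAt_pi.1 (hvD b hb)) 0
    have h1 : HasDerivAt (fun t => v t 1) (deriv v b 1) b :=
      (hasDerivAt_pi.1 (hvD b hb)) 1
    have hg : HasDerivAt (fun t => (v t 0) ^ 2 + (v t 1) ^ 2)
        (2 * v b 0 ^ 1 * deriv v b 0 + 2 * v b 1 ^ 1 * deriv v b 1) b := by
      have := (h0.pow 2).add (h1.pow 2)
      exact this.congr_deriv (by norm_num)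
    have hzero : HasDerivAt (fun t => (v t 0) ^ 2 + (v t 1) ^ 2) 0 b := by
      refine (hasDerivAt_const b (1:ℝ)).congr_of_eventuallyEq ?_
      filter_upwards [isOpen_Ioo.mem_nhds hb] with t ht
      exact hv1 t ht
    have := hg.unique hzero
    nlinarith [this]
  -- γ is independent of the first coordinate
  have hgam : ∀ b ∈ Ioo (0:ℝ) l, ∀ a₁ ∈ Ioo (0:ℝ) l, ∀ a₂ ∈ Ioo (0:ℝ) l,
      γ ![a₁, b] = γ ![a₂, b] := by
    intro b hb a₁ h₁ a₂ h₂
    have h := hsub b hb a₁ h₁ a₂ h₂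
    have h0 := congrFun h 0
    have h1 := congrFun h 1
    simp only [Pi.smul_apply, smul_eq_mul] at h0 h1
    have unit := hv1 b hb
    have orth := horth b hb
    linear_combination (-(γ ![a₁, b] - γ ![a₂, b])) * unit + v b 0 * h0 + v b 1 * h1
      + (a₁ - a₂) * orth
  -- the derivative of v vanishes
  have hvd0 : ∀ b ∈ Ioo (0:ℝ) l, deriv v b = 0 := by
    intro b hb
    have h := hsub b hb m hm (l/4) hm4
    have hg := hgam b hb m hm (l/4) hm4
    rw [hg, sub_self, zero_smul] at h
    have hne : m - l / 4 ≠ 0 := by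
      simp only [hmdef]; intro hc; nlinarith [hc]
    funext i
    have := congrFun h.symm i
    simp only [Pi.smul_apply, smul_eq_mul, Pi.zero_apply] at this
    have := mul_eq_zero.1 this
    rcases this with h' | h'
    · exact absurd h' hne
    · exact h'
  -- v is constant
  have hvconst : ∀ t ∈ Ioo (0:ℝ) l, v t = v m := by
    intro t ht
    refine const_of_hasDerivAt_zero (convex_Ioo 0 l) ?_ ht hm
    intro s hs
    have := hvD s hs
    rwa [hvd0 s hs] at this
  refine ⟨?_, ?_, ?_⟩
  · -- γ independent of x₁
    intro x hx y hy hxy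
    have hx' := hx; have hy' := hy
    rw [hQ] at hx' hy'
    have h := hgam (x 1) hx'.2 (x 0) hx'.1 (y 0) hy'.1
    rw [← vec_eta x, ← vec_eta y, hxy]
    rw [hxy] at h
    exact h
  · -- fderiv of first column in direction e₂ vanishes
    intro x hx
    have hx' := hx
    rw [hQ] at hx'
    have hev : (fun z => R z *ᵥ ![1, 0]) =ᶠ[𝓝 x] (fun _ => v m) := by
      filter_upwards [hQopen.mem_nhds hx] with z hz
      have hz' := hz
      rw [hQ] at hz'
      have hmem : ![m, z 1] ∈ Q := hmemQ m (z 1) hm hz'.2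
      have hR : R z = R ![m, z 1] := hRx1 z hz _ hmem (by simp)
      rw [hR]
      exact hvconst (z 1) hz'.2
    rw [hev.fderiv_eq, fderiv_fun_const]
    simp
  · -- R is a constant rotation
    refine ⟨![![v m 0, -(v m 1)], ![v m 1, v m 0]], ?_, ?_⟩
    · have hmemc : ![m, m] ∈ Q := hmemQ m m hm hm
      have h := so2_eta (hSO _ hmemc)
      have e0 : R ![m, m] 0 0 = v m 0 := (hvc m 0).symm
      have e1 : R ![m, m] 1 0 = v m 1 := (hvc m 1).symm
      rw [e0, e1] at h
      rw [← h]
      exact hSO _ hmemc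
    · intro x hx
      have hx' := hx
      rw [hQ] at hx'
      have hmem : ![m, x 1] ∈ Q := hmemQ m (x 1) hm hx'.2
      have hR : R x = R ![m, x 1] := hRx1 x hx _ hmem (by simp)
      have hvv : v (x 1) = v m := hvconst (x 1) hx'.2
      have h := so2_eta (hSO x hx)
      have e0 : R x 0 0 = v m 0 := by
        rw [hR, ← (hvc (x 1) 0), hvv]
      have e1 : R x 1 0 = v m 1 := by
        rw [hR, ← (hvc (x 1) 1), hvv]
      rw [h, e0, e1]
end
end

section
/- Let F = R(I + γ e₁⊗e₂) with R ∈ SO(2), γ ∈ ℝ, and let ψ ∈ W^{1,2}_#(Y; ℝ²) be Y-periodic with F + ∇ψ ∈ M_{e₁} a.e. in Y. Then F + ∇ψ = R(I + ζ e₁⊗e₂) a.e. for some ζ ∈ L²(Y) with ∫_Y ζ dy = γ; in particular the rotation part of F + ∇ψ is the constant R. -/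
set_option maxHeartbeats 1000000


open Matrix Set

noncomputable section

open MeasureTheory

/-- The matrix of a continuous linear map `ℝ² → ℝ²`. -/
def matrixOf (L : (Fin 2 → ℝ) →L[ℝ] (Fin 2 → ℝ)) : Matrix (Fin 2) (Fin 2) ℝ :=
  Matrix.of fun i j => L (Pi.single j 1) i

/-- The unit cell `Y = [0,1)²`. -/
def unitCell : Set (Fin 2 → ℝ) := {x | x 0 ∈ Ico (0 : ℝ) 1 ∧ x 1 ∈ Ico (0 : ℝ) 1}

/-- The rigid part `Y_rig = [0,1)×[λ,1)` of the unit cell. -/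
def unitRig (lam : ℝ) : Set (Fin 2 → ℝ) :=
  {x | x 0 ∈ Ico (0 : ℝ) 1 ∧ x 1 ∈ Ico lam 1}

namespace S17
abbrev e2 : (Fin 2 → ℝ) ≃ᵐ ℝ × ℝ := MeasurableEquiv.finTwoArrow

lemma cell_preimage : unitCell = e2 ⁻¹' ((Ico (0:ℝ) 1) ×ˢ (Ico (0:ℝ) 1)) := by
  ext x
  simp [unitCell, Set.mem_prod, MeasurableEquiv.finTwoArrow_apply]

lemma vol_cell : (volume unitCell) = 1 := by
  rw [cell_preimage,
    (volume_preserving_finTwoArrow ℝ).measure_preimage_emb (MeasurableEquiv.measurableEmbedding _)]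
  rw [Measure.volume_eq_prod, Measure.prod_prod]
  simp [Real.volume_Ico]

instance : IsFiniteMeasure (volume.restrict unitCell) := by
  constructor
  rw [Measure.restrict_apply_univ, vol_cell]
  norm_num

lemma slice_zero (ψ : (Fin 2 → ℝ) → (Fin 2 → ℝ)) (hψ : Differentiable ℝ ψ)
    (i : Fin 2) (v x0 : Fin 2 → ℝ) (hper : ψ (x0 + v) = ψ x0)
    (hint : IntegrableOn (fun t => fderiv ℝ ψ (x0 + t • v) v i) (Ico (0:ℝ) 1)) :
    ∫ t in Ico (0:ℝ) 1, fderiv ℝ ψ (x0 + t • v) v i = 0 := by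
  have hder : ∀ t : ℝ, HasDerivAt (fun s => ψ (x0 + s • v) i) (fderiv ℝ ψ (x0 + t • v) v i) t := by
    intro t
    have hc : HasDerivAt (fun s : ℝ => x0 + s • v) v t := by
      simpa using ((hasDerivAt_id t).smul_const v).const_add x0
    have h1 : HasDerivAt (fun s => ψ (x0 + s • v)) (fderiv ℝ ψ (x0 + t • v) v) t :=
      (hψ _).hasFDerivAt.comp_hasDerivAt t hc
    exact (ContinuousLinearMap.proj (R := ℝ) (φ := fun _ : Fin 2 => ℝ) i).hasFDerivAt.comp_hasDerivAt t h1
  have hii : IntervalIntegrable (fun t => fderiv ℝ ψ (x0 + t • v) v i) volume 0 1 := by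
    rw [intervalIntegrable_iff, uIoc_of_le (by norm_num : (0:ℝ) ≤ 1)]
    exact hint.congr_set_ae Ico_ae_eq_Ioc.symm
  have hftc := intervalIntegral.integral_eq_sub_of_hasDerivAt (f := fun s => ψ (x0 + s • v) i)
    (fun t _ => hder t) hii
  rw [setIntegral_congr_set Ico_ae_eq_Ioc,
    ← intervalIntegral.integral_of_le (by norm_num : (0:ℝ) ≤ 1), hftc]
  simp [hper]

lemma integral_cell_zero (ψ : (Fin 2 → ℝ) → (Fin 2 → ℝ)) (hψ : Differentiable ℝ ψ)
    (hper : ∀ x : Fin 2 → ℝ, ∀ i : Fin 2, ψ (x + Pi.single i 1) = ψ x) (i j : Fin 2)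
    (hInt : IntegrableOn (fun x => fderiv ℝ ψ x (Pi.single j 1) i) unitCell) :
    ∫ x in unitCell, fderiv ℝ ψ x (Pi.single j 1) i = 0 := by
  set g : (Fin 2 → ℝ) → ℝ := fun x => fderiv ℝ ψ x (Pi.single j 1) i with hg
  have hmp : MeasurePreserving (e2.symm) (volume : Measure (ℝ×ℝ)) volume :=
    (volume_preserving_finTwoArrow ℝ).symm e2
  have hpre : e2.symm ⁻¹' unitCell = (Ico (0:ℝ) 1) ×ˢ (Ico (0:ℝ) 1) := by
    rw [cell_preimage]
    ext p
    simp
  have h1 : ∫ p in (Ico (0:ℝ) 1) ×ˢ (Ico (0:ℝ) 1), g (e2.symm p) = ∫ x in unitCell, g x := by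
    rw [← hpre]
    exact hmp.setIntegral_preimage_emb (MeasurableEquiv.measurableEmbedding _) g unitCell
  rw [← h1]
  have hres : (volume : Measure (ℝ×ℝ)).restrict ((Ico (0:ℝ) 1) ×ˢ (Ico (0:ℝ) 1)) =
      (volume.restrict (Ico (0:ℝ) 1)).prod (volume.restrict (Ico (0:ℝ) 1)) := by
    rw [Measure.volume_eq_prod, Measure.prod_restrict]
  have hmpr : MeasurePreserving e2.symm
      ((volume : Measure (ℝ×ℝ)).restrict ((Ico (0:ℝ) 1) ×ˢ (Ico (0:ℝ) 1)))
      (volume.restrict unitCell) := by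
    have := hmp.restrict_preimage_emb (MeasurableEquiv.measurableEmbedding _) (s := unitCell)
    rwa [hpre] at this
  have hint2 : Integrable (fun p : ℝ×ℝ => g (e2.symm p))
      ((volume.restrict (Ico (0:ℝ) 1)).prod (volume.restrict (Ico (0:ℝ) 1))) := by
    rw [← hres]
    exact (hmpr.integrable_comp_emb (MeasurableEquiv.measurableEmbedding _)).mpr hInt
  rw [hres]
  fin_cases j
  · rw [MeasureTheory.integral_prod_symm _ hint2]
    have : ∀ᵐ b ∂(volume.restrict (Ico (0:ℝ) 1)),
        (∫ a, g (e2.symm (a, b)) ∂(volume.restrict (Ico (0:ℝ) 1))) = 0 := by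
      filter_upwards [hint2.prod_left_ae] with b hb
      have hco : ∀ a : ℝ, e2.symm (a, b) = e2.symm (0, b) + a • (Pi.single (0 : Fin 2) (1:ℝ) : Fin 2 → ℝ) := by
        intro a
        funext k
        fin_cases k <;> simp [show ∀ p : ℝ × ℝ, e2.symm p 0 = p.1 from fun _ => rfl,
          show ∀ p : ℝ × ℝ, e2.symm p 1 = p.2 from fun _ => rfl]
      have heq : (fun a : ℝ => g (e2.symm (a, b))) =
          fun t => fderiv ℝ ψ (e2.symm (0, b) + t • (Pi.single (0:Fin 2) (1:ℝ) : Fin 2 → ℝ)) (Pi.single (0:Fin 2) (1:ℝ)) i := by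
        funext a; rw [hg]; simp only []; rw [hco a]; rfl
      rw [heq]
      exact slice_zero ψ hψ i _ _ (hper _ 0) (by rw [← heq]; exact hb)
    rw [integral_congr_ae this]
    simp
  · rw [MeasureTheory.integral_prod _ hint2]
    have : ∀ᵐ a ∂(volume.restrict (Ico (0:ℝ) 1)),
        (∫ b, g (e2.symm (a, b)) ∂(volume.restrict (Ico (0:ℝ) 1))) = 0 := by
      filter_upwards [hint2.prod_right_ae] with a ha
      have hco : ∀ b : ℝ, e2.symm (a, b) = e2.symm (a, 0) + b • (Pi.single (1 : Fin 2) (1:ℝ) : Fin 2 → ℝ) := by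
        intro b
        funext k
        fin_cases k <;> simp [show ∀ p : ℝ × ℝ, e2.symm p 0 = p.1 from fun _ => rfl,
          show ∀ p : ℝ × ℝ, e2.symm p 1 = p.2 from fun _ => rfl]
      have heq : (fun b : ℝ => g (e2.symm (a, b))) =
          fun t => fderiv ℝ ψ (e2.symm (a, 0) + t • (Pi.single (1:Fin 2) (1:ℝ) : Fin 2 → ℝ)) (Pi.single (1:Fin 2) (1:ℝ)) i := by
        funext b; rw [hg]; simp only []; rw [hco b]; rfl
      rw [heq]
      exact slice_zero ψ hψ i _ _ (hper _ 1) (by rw [← heq]; exact ha)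
    rw [integral_congr_ae this]
    simp
end S17

/-- if `F = R(I + γ e₁⊗e₂)` with `R ∈ SO(2)`, `γ ∈ ℝ`, and
`ψ ∈ W^{1,2}_#(Y;ℝ²)` is `Y`-periodic with `F + ∇ψ ∈ M_{e₁}` a.e. in `Y`, then
`F + ∇ψ = R(I + ζ e₁⊗e₂)` a.e. for some `ζ ∈ L²(Y)` with `∫_Y ζ = γ`. -/
theorem stmt17 (R : Matrix (Fin 2) (Fin 2) ℝ) (hR : SO2 R) (γ : ℝ)
    (F : Matrix (Fin 2) (Fin 2) ℝ) (hF : F = R * (1 + γ • E12))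
    (ψ : (Fin 2 → ℝ) → (Fin 2 → ℝ)) (hψ : Differentiable ℝ ψ)
    (hψL2 : ∀ i j : Fin 2,
      MemLp (fun x => matrixOf (fderiv ℝ ψ x) i j) 2 (volume.restrict unitCell))
    (hper : ∀ x : Fin 2 → ℝ, ∀ i : Fin 2, ψ (x + Pi.single i 1) = ψ x)
    (hMe1 : ∀ᵐ x ∂(volume.restrict unitCell),
      (F + matrixOf (fderiv ℝ ψ x)).det = 1 ∧
      sq2 ((F + matrixOf (fderiv ℝ ψ x)) *ᵥ ![1, 0]) = 1) :
    ∃ ζ : (Fin 2 → ℝ) → ℝ, MemLp ζ 2 (volume.restrict unitCell) ∧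
      (∫ x in unitCell, ζ x) = γ ∧
      ∀ᵐ x ∂(volume.restrict unitCell),
        F + matrixOf (fderiv ℝ ψ x) = R * (1 + ζ x • E12) := by
  classical
  set M : (Fin 2 → ℝ) → Matrix (Fin 2) (Fin 2) ℝ := fun x => matrixOf (fderiv ℝ ψ x) with hM
  have hIntg : ∀ i j : Fin 2, IntegrableOn (fun x => M x i j) unitCell := fun i j =>
    (hψL2 i j).integrable (by norm_num)
  have hIzero : ∀ i j : Fin 2, ∫ x in unitCell, M x i j = 0 := fun i j =>
    S17.integral_cell_zero ψ hψ hper i j (hIntg i j)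
  -- rotation identities
  have hRo : Rᵀ * R = 1 := mul_eq_one_comm.mp hR.1
  have hn1 : R 0 0 * R 0 0 + R 1 0 * R 1 0 = 1 := by
    have := congrArg (fun m : Matrix (Fin 2) (Fin 2) ℝ => m 0 0) hRo
    simpa [Matrix.mul_apply, Fin.sum_univ_two, Matrix.one_apply] using this
  have hn2 : R 0 1 * R 0 1 + R 1 1 * R 1 1 = 1 := by
    have := congrArg (fun m : Matrix (Fin 2) (Fin 2) ℝ => m 1 1) hRo
    simpa [Matrix.mul_apply, Fin.sum_univ_two, Matrix.one_apply] using this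
  have ho : R 0 0 * R 0 1 + R 1 0 * R 1 1 = 0 := by
    have := congrArg (fun m : Matrix (Fin 2) (Fin 2) ℝ => m 0 1) hRo
    simpa [Matrix.mul_apply, Fin.sum_univ_two, Matrix.one_apply] using this
  have hdetR : R 0 0 * R 1 1 - R 0 1 * R 1 0 = 1 := by
    have := hR.2
    rwa [Matrix.det_fin_two] at this
  have hkey : (R 0 1 + R 1 0)^2 + (R 1 1 - R 0 0)^2 = 0 := by nlinarith
  have hb : R 0 1 = -(R 1 0) := by nlinarith [sq_nonneg (R 0 1 + R 1 0), sq_nonneg (R 1 1 - R 0 0)]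
  have hd : R 1 1 = R 0 0 := by nlinarith [sq_nonneg (R 0 1 + R 1 0), sq_nonneg (R 1 1 - R 0 0)]
  -- entries of F
  have hF00 : F 0 0 = R 0 0 := by
    rw [hF]; simp [Matrix.mul_apply, Fin.sum_univ_two, E12, Matrix.vecMulVec_apply,
      Matrix.one_apply, Matrix.add_apply, Matrix.smul_apply]
  have hF10 : F 1 0 = R 1 0 := by
    rw [hF]; simp [Matrix.mul_apply, Fin.sum_univ_two, E12, Matrix.vecMulVec_apply,
      Matrix.one_apply, Matrix.add_apply, Matrix.smul_apply]
  have hF01 : F 0 1 = γ * R 0 0 + R 0 1 := by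
    rw [hF]; simp [Matrix.mul_apply, Fin.sum_univ_two, E12, Matrix.vecMulVec_apply,
      Matrix.one_apply, Matrix.add_apply, Matrix.smul_apply]; ring
  have hF11 : F 1 1 = γ * R 1 0 + R 1 1 := by
    rw [hF]; simp [Matrix.mul_apply, Fin.sum_univ_two, E12, Matrix.vecMulVec_apply,
      Matrix.one_apply, Matrix.add_apply, Matrix.smul_apply]; ring
  have hIG : ∀ i j : Fin 2, ∫ x in unitCell, (F i j + M x i j) = F i j := by
    intro i j
    rw [MeasureTheory.integral_add (integrable_const _) (hIntg i j), hIzero i j,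
      MeasureTheory.setIntegral_const]
    simp [measureReal_def, S17.vol_cell]
  have hMem : ∀ i j : Fin 2, MemLp (fun x => F i j + M x i j) 2 (volume.restrict unitCell) :=
    fun i j => MemLp.add (f := fun _ => F i j) (g := fun x => M x i j) (memLp_const _) (hψL2 i j)
  have hintE : ∀ i j : Fin 2, Integrable (fun x => F i j + M x i j) (volume.restrict unitCell) :=
    fun i j => (integrable_const _).add (hIntg i j)
  -- first column is constant a.e.
  set q : (Fin 2 → ℝ) → ℝ :=
    fun x => (F 0 0 + M x 0 0 - R 0 0)^2 + (F 1 0 + M x 1 0 - R 1 0)^2 with hq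
  have hqint : Integrable q (volume.restrict unitCell) :=
    (((hMem 0 0).sub (memLp_const _)).integrable_sq).add
      (((hMem 1 0).sub (memLp_const _)).integrable_sq)
  have hsq : ∀ x, sq2 ((F + M x) *ᵥ ![1, 0]) = (F 0 0 + M x 0 0)^2 + (F 1 0 + M x 1 0)^2 := by
    intro x
    simp [sq2, Matrix.mulVec, dotProduct, Matrix.vecHead, Fin.sum_univ_two, Matrix.add_apply]
  have hq0 : ∫ x in unitCell, q x = 0 := by
    have he : ∀ᵐ x ∂(volume.restrict unitCell), q x =
        2 - ((2*R 0 0)*(F 0 0 + M x 0 0) + (2*R 1 0)*(F 1 0 + M x 1 0)) := by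
      filter_upwards [hMe1] with x hx
      have h2 := hx.2
      rw [hsq x] at h2
      rw [hq]
      linear_combination h2 + hn1
    rw [integral_congr_ae he]
    have hsub := MeasureTheory.integral_sub (μ := volume.restrict unitCell)
      (f := fun _ => (2:ℝ))
      (g := fun x => (2*R 0 0)*(F 0 0 + M x 0 0) + (2*R 1 0)*(F 1 0 + M x 1 0))
      (integrable_const _) (by exact ((hintE 0 0).const_mul _).add ((hintE 1 0).const_mul _))
    rw [hsub,
      MeasureTheory.integral_add (by exact (hintE 0 0).const_mul _)
        (by exact (hintE 1 0).const_mul _),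
      MeasureTheory.integral_const_mul, MeasureTheory.integral_const_mul, hIG 0 0, hIG 1 0,
      MeasureTheory.integral_const]
    simp only [measureReal_def, Measure.restrict_apply_univ, S17.vol_cell, ENNReal.toReal_one, one_smul]
    rw [hF00, hF10]
    linarith [hn1]
  have hq_ae : q =ᵐ[volume.restrict unitCell] 0 := by
    refine (MeasureTheory.integral_eq_zero_iff_of_nonneg_ae ?_ hqint).mp hq0
    exact Filter.Eventually.of_forall fun x => by rw [hq]; positivity
  have hcol : ∀ᵐ x ∂(volume.restrict unitCell),
      F 0 0 + M x 0 0 = R 0 0 ∧ F 1 0 + M x 1 0 = R 1 0 := by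
    filter_upwards [hq_ae] with x hx
    rw [hq] at hx
    simp only [Pi.zero_apply] at hx
    constructor <;>
      nlinarith [sq_nonneg (F 0 0 + M x 0 0 - R 0 0), sq_nonneg (F 1 0 + M x 1 0 - R 1 0)]
  refine ⟨fun x => R 0 0 * (F 0 1 + M x 0 1) + R 1 0 * (F 1 1 + M x 1 1), ?_, ?_, ?_⟩
  · exact ((hMem 0 1).const_mul _).add ((hMem 1 1).const_mul _)
  · rw [MeasureTheory.integral_add (by exact (hintE 0 1).const_mul _)
      (by exact (hintE 1 1).const_mul _),
      MeasureTheory.integral_const_mul, MeasureTheory.integral_const_mul, hIG 0 1, hIG 1 1,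
      hF01, hF11]
    linear_combination γ*hn1 + ho
  · filter_upwards [hMe1, hcol] with x hx hcolx
    obtain ⟨h00, h10⟩ := hcolx
    have hdetx := hx.1
    rw [Matrix.det_fin_two] at hdetx
    simp only [Matrix.add_apply] at hdetx
    have hdet2 : R 0 0 * (F 1 1 + M x 1 1) - (F 0 1 + M x 0 1) * R 1 0 = 1 := by
      rw [← h00, ← h10]
      linear_combination hdetx
    have hRz : ∀ z : ℝ, R * (1 + z • E12) =
        !![R 0 0, R 0 0 * z + R 0 1; R 1 0, R 1 0 * z + R 1 1] := by
      intro z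
      ext i j
      fin_cases i <;> fin_cases j <;>
        simp [Matrix.mul_apply, Fin.sum_univ_two, E12, Matrix.vecMulVec_apply,
          Matrix.one_apply] <;> ring
    rw [hRz]
    ext i j
    fin_cases i <;> fin_cases j <;>
      simp only [Matrix.add_apply, Fin.mk_zero, Fin.mk_one, Matrix.cons_val', Matrix.cons_val_zero,
        Matrix.cons_val_one, Matrix.head_cons, Matrix.empty_val', Matrix.cons_val_fin_one,
        Matrix.head_fin_const, Matrix.of_apply, Matrix.cons_val_zero, Matrix.cons_val_one]
    · linear_combination h00
    · linear_combination (-(F 0 1 + M x 0 1))*hn1 + (-(R 1 0))*hdet2 + (-1)*hb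
    · linear_combination h10
    · linear_combination (R 0 0)*hdet2 - (F 1 1 + M x 1 1)*hn1 - hd
end
end

section
/- Let Ω ⊂ ℝ² be a bounded Lipschitz domain, λ ∈ (0,1), m a unit vector, and R ∈ SO(2). Suppose (v_ε) ⊂ L²(Ω; ℝ^{2×2}), χ_ε := 1_{εY_soft ∩ Ω}, and assume v_ε χ_ε ⇀ G − (1−λ)R weakly in L²(Ω; ℝ^{2×2}) for a constant matrix G, |v_ε m| = 1 a.e. on Ω \ (εY_soft), and |Ω ∩ εY_soft| → λ|Ω|. Then liminf_{ε→0} ∫_Ω |v_ε m|² − 1 dx ≥ (|Ω|/λ)|Gm − (1−λ)Rm|² − λ|Ω|. -/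
open Matrix Set

noncomputable section

open MeasureTheory Filter Topology

/-- The `ε`-scaled periodic soft layers `εY_soft`, `Y_soft = [0,1)×[0,λ)`
extended `Y`-periodically. -/
def softLayers (lam ε : ℝ) : Set (Fin 2 → ℝ) :=
  {x | Int.fract (x 1 / ε) < lam}

lemma sq_int_le {α : Type*} [MeasurableSpace α] (μ : Measure α) [IsFiniteMeasure μ]
    {g : α → ℝ} (hg : Integrable g μ) (hg2 : Integrable (fun x => g x ^ 2) μ) :
    (∫ x, g x ∂μ) ^ 2 ≤ (μ Set.univ).toReal * ∫ x, g x ^ 2 ∂μ := by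
  set V := (μ Set.univ).toReal with hV
  set I := ∫ x, g x ∂μ with hI
  have hVnn : 0 ≤ V := ENNReal.toReal_nonneg
  have h0 : 0 ≤ ∫ x, (V * g x - I) ^ 2 ∂μ := integral_nonneg fun x => sq_nonneg _
  have hexp : ∫ x, (V * g x - I) ^ 2 ∂μ
      = V ^ 2 * (∫ x, g x ^ 2 ∂μ) - 2 * V * I * I + I ^ 2 * V := by
    have h1 : (fun x => (V * g x - I) ^ 2)
        = fun x => V ^ 2 * g x ^ 2 - 2 * V * I * g x + I ^ 2 := by
      funext x; ring
    rw [h1]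
    have hsub : Integrable (fun x => V ^ 2 * g x ^ 2 - 2 * V * I * g x) μ :=
      (hg2.const_mul _).sub (hg.const_mul _)
    rw [integral_add hsub (integrable_const _),
      integral_sub (hg2.const_mul _) (hg.const_mul _), integral_const_mul, integral_const_mul,
      integral_const]
    simp [← hI, ← hV, smul_eq_mul, Measure.real]; ring
  rcases eq_or_lt_of_le hVnn with hV0 | hVpos
  · have : μ Set.univ = 0 := by
      have := (ENNReal.toReal_eq_zero_iff _).mp hV0.symm
      rcases this with h | h
      · exact h
      · exact absurd h (measure_ne_top μ _)
    have hμ : μ = 0 := by simpa [Measure.measure_univ_eq_zero] using this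
    simp [hI, hμ, ← hV0]
  · have h2 : 0 ≤ V * (V * (∫ x, g x ^ 2 ∂μ) - I ^ 2) := by nlinarith [hexp ▸ h0]
    nlinarith

lemma dot_sq_le (a b : Fin 2 → ℝ) :
    (a 0 * b 0 + a 1 * b 1) ^ 2 ≤ sq2 a * sq2 b := by
  simp only [sq2]
  nlinarith [sq_nonneg (a 0 * b 1 - a 1 * b 0)]

lemma sq2_nonneg (a : Fin 2 → ℝ) : 0 ≤ sq2 a := add_nonneg (sq_nonneg _) (sq_nonneg _)

set_option maxHeartbeats 1000000 in
/-- lower-bound estimate: if `v_ε 1_{εY_soft∩Ω} ⇀ G − (1−λ)R`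
weakly in `L²(Ω;ℝ^{2×2})`, `|v_ε m| = 1` a.e. off the soft layers, and
`|Ω ∩ εY_soft| → λ|Ω|`, then
`liminf ∫_Ω |v_ε m|² − 1 ≥ (|Ω|/λ)|Gm − (1−λ)Rm|² − λ|Ω|`. -/
theorem stmt19 (Ω : Set (Fin 2 → ℝ)) (hopen : IsOpen Ω)
    (hbdd : Bornology.IsBounded Ω) (hΩmeas : MeasurableSet Ω)
    (lam : ℝ) (hlam : lam ∈ Ioo (0 : ℝ) 1)
    (m : Fin 2 → ℝ) (hm : sq2 m = 1)
    (R : Matrix (Fin 2) (Fin 2) ℝ) (hR : SO2 R)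
    (G : Matrix (Fin 2) (Fin 2) ℝ)
    (ε : ℕ → ℝ) (hεpos : ∀ n, 0 < ε n) (hε0 : Tendsto ε atTop (𝓝 0))
    (v : ℕ → (Fin 2 → ℝ) → Matrix (Fin 2) (Fin 2) ℝ)
    (hInt : ∀ n, IntegrableOn (fun x => sq2 (v n x *ᵥ m)) Ω volume)
    -- weak convergence `v_ε 1_{εY_soft ∩ Ω} ⇀ G − (1−λ)R` in `L²(Ω; ℝ^{2×2})`:
    (hweak : ∀ φ : (Fin 2 → ℝ) → Matrix (Fin 2) (Fin 2) ℝ,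
      (∀ i j : Fin 2, MemLp (fun x => φ x i j) 2 (volume.restrict Ω)) →
      Tendsto (fun n => ∫ x in Ω, ∑ i, ∑ j,
          (Set.indicator (softLayers lam (ε n)) (fun x => v n x) x) i j * φ x i j)
        atTop (𝓝 (∫ x in Ω, ∑ i, ∑ j, (G - (1 - lam) • R) i j * φ x i j)))
    (hnorm1 : ∀ n, ∀ᵐ x ∂(volume.restrict (Ω \ softLayers lam (ε n))),
      sq2 (v n x *ᵥ m) = 1)
    (hvol : Tendsto (fun n => (volume (Ω ∩ softLayers lam (ε n))).toReal) atTop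
      (𝓝 (lam * (volume Ω).toReal))) :
    ((volume Ω).toReal / lam) * sq2 (G *ᵥ m - (1 - lam) • (R *ᵥ m))
        - lam * (volume Ω).toReal ≤
      atTop.liminf (fun n => ∫ x in Ω, (sq2 (v n x *ᵥ m) - 1)) := by
  classical
  set u : Fin 2 → ℝ := G *ᵥ m - (1 - lam) • (R *ᵥ m) with hu
  have hΩfin : volume Ω < ⊤ := hbdd.measure_lt_top
  haveI : IsFiniteMeasure (volume.restrict Ω) :=
    ⟨by rwa [Measure.restrict_apply_univ]⟩
  have hSmeas : ∀ n, MeasurableSet (softLayers lam (ε n)) := by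
    intro n
    have hmb : Measurable fun x : Fin 2 → ℝ => Int.fract (x 1 / ε n) :=
      ((measurable_pi_apply 1).div_const _).fract
    exact measurableSet_lt hmb measurable_const
  set A : ℕ → Set (Fin 2 → ℝ) := fun n => Ω ∩ softLayers lam (ε n) with hA
  have hAmeas : ∀ n, MeasurableSet (A n) := fun n => hΩmeas.inter (hSmeas n)
  have hAfin : ∀ n, volume (A n) < ⊤ :=
    fun n => lt_of_le_of_lt (measure_mono inter_subset_left) hΩfin
  set V : ℕ → ℝ := fun n => (volume (A n)).toReal with hV
  have hVnn : ∀ n, 0 ≤ V n := fun n => ENNReal.toReal_nonneg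
  set q : (Fin 2 → ℝ) → ℕ → (Fin 2 → ℝ) → ℝ := fun w n =>
    Set.indicator (softLayers lam (ε n))
      (fun y => w 0 * (v n y *ᵥ m) 0 + w 1 * (v n y *ᵥ m) 1) with hq
  set dotu : (Fin 2 → ℝ) → ℝ := fun w => w 0 * u 0 + w 1 * u 1 with hdotu
  have hdusq : dotu u = sq2 u := by simp only [hdotu, sq2]; ring
  -- transfer `∫ x in Ω, indicator` to `∫ x in A n`
  have hindint : ∀ n (f : (Fin 2 → ℝ) → ℝ),
      ∫ x in Ω, (softLayers lam (ε n)).indicator f x = ∫ x in A n, f x := by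
    intro n f
    rw [integral_indicator (hSmeas n), Measure.restrict_restrict (hSmeas n),
      Set.inter_comm]
  -- the general weak-convergence pairing
  have hPair : ∀ (w : Fin 2 → ℝ) (ψ : (Fin 2 → ℝ) → ℝ),
      MemLp ψ 2 (volume.restrict Ω) →
      Tendsto (fun n => ∫ x in Ω, q w n x * ψ x) atTop
        (𝓝 (∫ x in Ω, dotu w * ψ x)) := by
    intro w ψ hψ
    have hφmem : ∀ i j : Fin 2, MemLp
        (fun x => (Matrix.of fun i j => ψ x * (w i * m j)) i j) 2
        (volume.restrict Ω) := by
      intro i j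
      have := hψ.const_mul (w i * m j)
      simpa [Matrix.of_apply, mul_comm] using this
    have h := hweak (fun x => Matrix.of fun i j => ψ x * (w i * m j)) hφmem
    have hL : ∀ n, (∫ x in Ω, ∑ i, ∑ j,
        (Set.indicator (softLayers lam (ε n)) (fun x => v n x) x) i j
          * (Matrix.of fun i j => ψ x * (w i * m j)) i j)
        = ∫ x in Ω, q w n x * ψ x := by
      intro n
      refine integral_congr_ae (Filter.Eventually.of_forall fun x => ?_)
      by_cases hx : x ∈ softLayers lam (ε n)
      · simp only [Set.indicator_of_mem hx, hq, Fin.sum_univ_two, Matrix.of_apply,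
          Matrix.mulVec, dotProduct, Fin.sum_univ_two]
        ring
      · simp [hq, Set.indicator_of_notMem hx]
    have hR' : (∫ x in Ω, ∑ i, ∑ j, (G - (1 - lam) • R) i j
        * (Matrix.of fun i j => ψ x * (w i * m j)) i j)
        = ∫ x in Ω, dotu w * ψ x := by
      refine integral_congr_ae (Filter.Eventually.of_forall fun x => ?_)
      simp only [Fin.sum_univ_two, Matrix.of_apply, Matrix.sub_apply, Matrix.smul_apply,
        smul_eq_mul, hdotu, hu, Pi.sub_apply, Pi.smul_apply, Matrix.mulVec,
        dotProduct, Fin.sum_univ_two, smul_eq_mul]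
      ring
    simp only [hL, hR'] at h
    exact h
  have hone : MemLp (fun _ : Fin 2 → ℝ => (1 : ℝ)) 2 (volume.restrict Ω) :=
    memLp_const _
  -- pairing with constant 1
  have hPw : ∀ w : Fin 2 → ℝ, Tendsto (fun n => ∫ x in Ω, q w n x) atTop
      (𝓝 ((volume Ω).toReal * dotu w)) := by
    intro w
    have h := hPair w (fun _ => 1) hone
    simp only [mul_one] at h
    have : (∫ x in Ω, dotu w) = (volume Ω).toReal * dotu w := by
      rw [integral_const]
      simp [Measure.restrict_apply_univ, smul_eq_mul, Measure.real]
    rwa [this] at h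
  set c : ℕ → ℝ := fun n => ∫ x in Ω, q u n x with hc
  have hW : Tendsto c atTop (𝓝 ((volume Ω).toReal * sq2 u)) := by
    have := hPw u
    rwa [hdusq] at this
  -- splitting of the integral
  have hsplit : ∀ n, ∫ x in Ω, (sq2 (v n x *ᵥ m) - 1)
      = (∫ x in A n, sq2 (v n x *ᵥ m)) - V n := by
    intro n
    have hIntA : IntegrableOn (fun x => sq2 (v n x *ᵥ m)) (A n) volume :=
      (hInt n).mono_set inter_subset_left
    have hIcA : IntegrableOn (fun _ : Fin 2 → ℝ => (1 : ℝ)) (A n) volume :=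
      integrableOn_const (hAfin n).ne
    have hIntΩ : IntegrableOn (fun x => sq2 (v n x *ᵥ m) - 1) Ω volume :=
      (hInt n).sub (integrableOn_const hΩfin.ne)
    have h01 : ∫ x in Ω \ softLayers lam (ε n), (sq2 (v n x *ᵥ m) - 1) = 0 := by
      have hae : ∀ᵐ x ∂(volume.restrict (Ω \ softLayers lam (ε n))),
          sq2 (v n x *ᵥ m) - 1 = (0 : ℝ) :=
        (hnorm1 n).mono fun x hx => by rw [hx]; ring
      rw [integral_congr_ae hae, integral_zero]
    have h2 := integral_inter_add_diff (s := Ω) (t := softLayers lam (ε n))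
      (hSmeas n) hIntΩ
    rw [← h2, h01, add_zero, integral_sub hIntA hIcA, integral_const]
    simp [hV, smul_eq_mul, Measure.real]
  -- the per-n lower bound
  have key : ∀ n, (c n) ^ 2 / (sq2 u * V n) - V n
      ≤ ∫ x in Ω, (sq2 (v n x *ᵥ m) - 1) := by
    intro n
    set f : (Fin 2 → ℝ) → (Fin 2 → ℝ) := fun x => v n x *ᵥ m with hf
    have hIntA : IntegrableOn (fun x => sq2 (f x)) (A n) volume :=
      (hInt n).mono_set inter_subset_left
    rw [hsplit n]
    have hnnInt : 0 ≤ ∫ x in A n, sq2 (f x) :=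
      setIntegral_nonneg (hAmeas n) fun x _ => sq2_nonneg _
    have hcval : c n = ∫ x in A n, (u 0 * f x 0 + u 1 * f x 1) := by
      rw [hc]; exact hindint n _
    have hmain : (c n) ^ 2 / (sq2 u * V n) ≤ ∫ x in A n, sq2 (f x) := by
      by_cases hzero : sq2 u * V n = 0
      · rw [hzero, div_zero]; exact hnnInt
      · have hpos : 0 < sq2 u * V n :=
          lt_of_le_of_ne (mul_nonneg (sq2_nonneg u) (hVnn n)) (Ne.symm hzero)
        rw [div_le_iff₀ hpos]
        by_cases hmeas : AEStronglyMeasurable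
            (fun x => u 0 * f x 0 + u 1 * f x 1) (volume.restrict (A n))
        · haveI : IsFiniteMeasure (volume.restrict (A n)) :=
            ⟨by rw [Measure.restrict_apply_univ]; exact hAfin n⟩
          have hbound : ∀ x, (u 0 * f x 0 + u 1 * f x 1) ^ 2 ≤ sq2 u * sq2 (f x) :=
            fun x => dot_sq_le u (f x)
          have hint : Integrable (fun x => u 0 * f x 0 + u 1 * f x 1)
              (volume.restrict (A n)) := by
            have hbd0 : Integrable (fun x => 1 + sq2 u * sq2 (f x))
                (volume.restrict (A n)) :=
              (integrable_const 1).add (hIntA.const_mul (sq2 u))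
            have hbd : Integrable (fun x => (1 + sq2 u * sq2 (f x)) / 2)
                (volume.restrict (A n)) := hbd0.div_const 2
            refine Integrable.mono' hbd hmeas ?_
            refine Filter.Eventually.of_forall fun x => ?_
            have h1 := hbound x
            have h2 : 0 ≤ sq2 u * sq2 (f x) :=
              mul_nonneg (sq2_nonneg u) (sq2_nonneg _)
            rw [Real.norm_eq_abs]
            nlinarith [sq_abs (u 0 * f x 0 + u 1 * f x 1),
              abs_nonneg (u 0 * f x 0 + u 1 * f x 1),
              sq_nonneg (1 - |u 0 * f x 0 + u 1 * f x 1|)]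
          have hsq : Integrable (fun x => (u 0 * f x 0 + u 1 * f x 1) ^ 2)
              (volume.restrict (A n)) := by
            have hms : AEStronglyMeasurable
                (fun x => (u 0 * f x 0 + u 1 * f x 1) ^ 2)
                (volume.restrict (A n)) := by
              exact hmeas.pow 2
            refine Integrable.mono' (hIntA.const_mul (sq2 u)) hms ?_
            refine Filter.Eventually.of_forall fun x => ?_
            rw [Real.norm_eq_abs, abs_of_nonneg (sq_nonneg _)]
            exact hbound x
          have h1 := sq_int_le (volume.restrict (A n)) hint hsq
          rw [Measure.restrict_apply_univ] at h1
          have h2 : ∫ x in A n, (u 0 * f x 0 + u 1 * f x 1) ^ 2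
              ≤ sq2 u * ∫ x in A n, sq2 (f x) := by
            rw [← integral_const_mul]
            exact integral_mono hsq (hIntA.const_mul _) fun x => hbound x
          rw [hcval]
          nlinarith [hVnn n]
        · have hcn : c n = 0 := by
            rw [hcval]
            apply integral_undef
            intro hcont
            exact hmeas hcont.aestronglyMeasurable
          rw [hcn]
          have : 0 ≤ (∫ x in A n, sq2 (f x)) * (sq2 u * V n) :=
            mul_nonneg hnnInt (le_of_lt hpos)
          simpa using this
    linarith
  -- limit of the lower bounds
  set T : ℝ := ((volume Ω).toReal / lam) * sq2 u - lam * (volume Ω).toReal with hT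
  set b : ℕ → ℝ := fun n => (c n) ^ 2 / (sq2 u * V n) - V n with hb
  have hbT : Tendsto b atTop (𝓝 T) := by
    by_cases hsu : sq2 u = 0
    · have hbeq : b = fun n => -V n := by
        funext n; simp [hb, hsu]
      have hTeq : T = -(lam * (volume Ω).toReal) := by simp [hT, hsu]
      rw [hbeq, hTeq]
      exact hvol.neg
    · by_cases hΩ0 : (volume Ω).toReal = 0
      · have hΩz : volume Ω = 0 :=
          (ENNReal.toReal_eq_zero_iff _).mp hΩ0 |>.resolve_right (ne_of_lt hΩfin)
        have hVz : ∀ n, V n = 0 := by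
          intro n
          have : volume (A n) = 0 := measure_mono_null inter_subset_left hΩz
          simp [hV, this]
        have hcz : ∀ n, c n = 0 := by
          intro n
          have hrz : volume.restrict Ω = 0 := Measure.restrict_eq_zero.mpr hΩz
          simp [hc, hrz]
        have hbeq : b = fun _ => 0 := by
          funext n; simp [hb, hcz n, hVz n]
        have hTeq : T = 0 := by simp [hT, hΩ0]
        rw [hbeq, hTeq]; exact tendsto_const_nhds
      · have hsu' : 0 < sq2 u := lt_of_le_of_ne (sq2_nonneg u) (Ne.symm hsu)
        have hΩ' : 0 < (volume Ω).toReal :=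
          lt_of_le_of_ne ENNReal.toReal_nonneg (Ne.symm hΩ0)
        have hlam0 : 0 < lam := hlam.1
        have hden : Tendsto (fun n => sq2 u * V n) atTop
            (𝓝 (sq2 u * (lam * (volume Ω).toReal))) :=
          hvol.const_mul _
        have hdenne : sq2 u * (lam * (volume Ω).toReal) ≠ 0 := by positivity
        have hnum : Tendsto (fun n => (c n) ^ 2) atTop
            (𝓝 (((volume Ω).toReal * sq2 u) ^ 2)) := hW.pow 2
        have hbT' : Tendsto b atTop
            (𝓝 (((volume Ω).toReal * sq2 u) ^ 2
              / (sq2 u * (lam * (volume Ω).toReal)) - lam * (volume Ω).toReal)) :=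
          (hnum.div hden hdenne).sub hvol
        have : ((volume Ω).toReal * sq2 u) ^ 2
            / (sq2 u * (lam * (volume Ω).toReal)) - lam * (volume Ω).toReal = T := by
          rw [hT]
          field_simp
        rwa [this] at hbT'
  -- conclude via liminf / Banach–Steinhaus dichotomy
  set a : ℕ → ℝ := fun n => ∫ x in Ω, (sq2 (v n x *ᵥ m) - 1) with ha
  show T ≤ atTop.liminf a
  by_cases hcb : BddAbove {t : ℝ | ∀ᶠ n in atTop, t ≤ a n}
  · -- honest case
    obtain ⟨b0, hb0⟩ := hcb
    have hco : IsCoboundedUnder (· ≥ ·) atTop a := by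
      refine ⟨b0, fun t ht => ?_⟩
      exact hb0 (by simpa [Filter.eventually_map] using ht)
    have hTlim : T = atTop.liminf b := (hbT.liminf_eq).symm
    have hbB : IsBoundedUnder (· ≥ ·) atTop b := hbT.isBoundedUnder_ge
    calc T = atTop.liminf b := hTlim
      _ ≤ atTop.liminf a :=
        Filter.liminf_le_liminf (Filter.Eventually.of_forall key) hbB hco
  · -- junk case: liminf = 0, show T ≤ 0 (positivity forces a contradiction)
    have hlim0 : atTop.liminf a = 0 := by
      rw [Filter.liminf_eq]
      exact Real.sSup_of_not_bddAbove hcb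
    rw [hlim0]
    rcases eq_or_ne (volume Ω).toReal 0 with hΩ0 | hΩ0
    · rw [hT, hΩ0]; simp
    rcases eq_or_ne (sq2 u) 0 with hsu | hsu
    · rw [hT, hsu]
      have h1 : 0 ≤ lam * (volume Ω).toReal :=
        mul_nonneg hlam.1.le ENNReal.toReal_nonneg
      simp only [mul_zero, zero_sub]
      linarith
    exfalso
    have hsu' : 0 < sq2 u := lt_of_le_of_ne (sq2_nonneg u) (Ne.symm hsu)
    have hΩ' : 0 < (volume Ω).toReal :=
      lt_of_le_of_ne ENNReal.toReal_nonneg (Ne.symm hΩ0)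
    have hbig : ∀ M : ℝ, ∀ᶠ n in atTop, M ≤ a n := by
      intro M
      obtain ⟨t, ht, hMt⟩ := not_bddAbove_iff.mp hcb M
      exact ht.mono fun n hn => le_trans hMt.le hn
    -- eventual integrability of pairings with nonzero limits
    have hIntEv : ∀ w : Fin 2 → ℝ, dotu w ≠ 0 →
        ∀ᶠ n in atTop, Integrable (q w n) (volume.restrict Ω) := by
      intro w hw
      have hne : (volume Ω).toReal * dotu w ≠ 0 := mul_ne_zero hΩ0 hw
      have h2 := (hPw w).eventually_ne hne
      exact h2.mono fun n hn => by
        by_contra hcon; exact hn (integral_undef hcon)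
    -- coordinate directions
    set e : Fin 2 → (Fin 2 → ℝ) := fun k i => if i = k then 1 else 0 with he
    have heval : ∀ (k : Fin 2) (z : Fin 2 → ℝ), e k 0 * z 0 + e k 1 * z 1 = z k := by
      intro k z; fin_cases k <;> simp [he]
    set t : Fin 2 → ℝ := fun k => if u k = 0 then 1 else sq2 u / u k with ht
    have htne : ∀ k, t k ≠ 0 := by
      intro k; rw [ht]; dsimp only
      split_ifs with h
      · norm_num
      · exact div_ne_zero hsu h
    set w : Fin 2 → (Fin 2 → ℝ) := fun k i => u i + t k * e k i with hw
    have hwdot : ∀ k, dotu (w k) ≠ 0 := by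
      intro k
      have hcompute : dotu (w k) = sq2 u + t k * u k := by
        have h1 := heval k u
        simp only [hdotu, hw, sq2]
        linear_combination (t k) * h1
      rw [hcompute, ht]
      dsimp only
      split_ifs with h
      · rw [h]; simpa using hsu
      · rw [div_mul_cancel₀ _ h]
        positivity
    have hqlin : ∀ (k : Fin 2) n x, q (w k) n x - q u n x = t k * q (e k) n x := by
      intro k n x
      by_cases hx : x ∈ softLayers lam (ε n)
      · simp only [hq, Set.indicator_of_mem hx, hw]
        ring
      · simp [hq, Set.indicator_of_notMem hx]
    have hMem : ∀ k : Fin 2, ∀ᶠ n in atTop,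
        MemLp (q (e k) n) 2 (volume.restrict Ω) := by
      intro k
      filter_upwards [hIntEv u (by rw [hdusq]; exact hsu), hIntEv (w k) (hwdot k)]
        with n h1 h2
      have hasm : AEStronglyMeasurable (q (e k) n) (volume.restrict Ω) := by
        have heq : (fun x => (t k)⁻¹ * (q (w k) n x - q u n x)) = q (e k) n := by
          funext x
          rw [hqlin k n x, inv_mul_cancel_left₀ (htne k)]
        rw [← heq]
        exact (h2.aestronglyMeasurable.sub h1.aestronglyMeasurable).const_mul _
      rw [memLp_two_iff_integrable_sq hasm]
      have hms2 : AEStronglyMeasurable (fun x => (q (e k) n x) ^ 2)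
          (volume.restrict Ω) := by
        exact hasm.pow 2
      refine Integrable.mono' (hInt n) hms2 ?_
      refine Filter.Eventually.of_forall fun x => ?_
      rw [Real.norm_eq_abs, abs_of_nonneg (sq_nonneg _)]
      by_cases hx : x ∈ softLayers lam (ε n)
      · simp only [hq, Set.indicator_of_mem hx, heval k (v n x *ᵥ m)]
        have h0 := sq_nonneg ((v n x *ᵥ m) 0)
        have h1' := sq_nonneg ((v n x *ᵥ m) 1)
        fin_cases k <;> simp [sq2] <;> nlinarith
      · simp only [hq, Set.indicator_of_notMem hx]
        simpa using sq2_nonneg (v n x *ᵥ m)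
    -- Banach–Steinhaus
    have hBS : ∀ k : Fin 2, ∃ C : ℝ, ∀ n,
        MemLp (q (e k) n) 2 (volume.restrict Ω) →
        ∫ x in Ω, (q (e k) n x) ^ 2 ≤ C := by
      intro k
      set g : ℕ → (Lp ℝ 2 (volume.restrict Ω)) →L[ℝ] ℝ := fun n =>
        if h : MemLp (q (e k) n) 2 (volume.restrict Ω)
        then innerSL ℝ (h.toLp _) else 0 with hg
      have hpt : ∀ ψ : Lp ℝ 2 (volume.restrict Ω), ∃ C, ∀ n, ‖g n ψ‖ ≤ C := by
        intro ψ
        have hconv := hPair (e k) (ψ : (Fin 2 → ℝ) → ℝ) (Lp.memLp ψ)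
        obtain ⟨C, hC⟩ := hconv.abs.bddAbove_range
        refine ⟨max C 0, fun n => ?_⟩
        rw [hg]; dsimp only
        split_ifs with h
        · have hval : innerSL ℝ (h.toLp _) ψ = ∫ x in Ω, q (e k) n x * ψ x := by
            rw [innerSL_apply_apply, MeasureTheory.L2.inner_def]
            refine integral_congr_ae ?_
            filter_upwards [h.coeFn_toLp] with x hx
            rw [hx]
            simp [RCLike.inner_apply, mul_comm]
          rw [hval, Real.norm_eq_abs]
          exact le_max_of_le_left (hC (Set.mem_range_self n))
        · simp
      obtain ⟨C', hC'⟩ := banach_steinhaus hpt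
      refine ⟨C' ^ 2, fun n h => ?_⟩
      have h1 : ‖g n‖ = ‖h.toLp _‖ := by
        rw [hg]; dsimp only; rw [dif_pos h]; exact innerSL_apply_norm (𝕜 := ℝ) _
      have h2 : ‖h.toLp _‖ ≤ C' := h1 ▸ hC' n
      have h3 : ∫ x in Ω, (q (e k) n x) ^ 2 = ‖h.toLp _‖ ^ 2 := by
        rw [← real_inner_self_eq_norm_sq, MeasureTheory.L2.inner_def]
        refine (integral_congr_ae ?_).symm
        filter_upwards [h.coeFn_toLp] with x hx
        rw [hx]
        simp [RCLike.inner_apply, sq]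
      rw [h3]
      have h4 := norm_nonneg (h.toLp (q (e k) n))
      nlinarith
    obtain ⟨C0, hC0⟩ := hBS 0
    obtain ⟨C1, hC1⟩ := hBS 1
    have hcomb : ∀ᶠ n in atTop, a n ≤ C0 + C1 := by
      filter_upwards [hMem 0, hMem 1] with n h0 h1
      have hsplitval : ∀ x, (softLayers lam (ε n)).indicator
          (fun y => sq2 (v n y *ᵥ m)) x
          = (q (e 0) n x) ^ 2 + (q (e 1) n x) ^ 2 := by
        intro x
        by_cases hx : x ∈ softLayers lam (ε n)
        · simp only [hq, Set.indicator_of_mem hx, heval 0 (v n x *ᵥ m),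
            heval 1 (v n x *ᵥ m), sq2]
        · simp [hq, Set.indicator_of_notMem hx]
      have hint0 : Integrable (fun x => (q (e 0) n x) ^ 2) (volume.restrict Ω) :=
        (memLp_two_iff_integrable_sq h0.aestronglyMeasurable).mp h0
      have hint1 : Integrable (fun x => (q (e 1) n x) ^ 2) (volume.restrict Ω) :=
        (memLp_two_iff_integrable_sq h1.aestronglyMeasurable).mp h1
      have hIA : ∫ x in A n, sq2 (v n x *ᵥ m)
          = (∫ x in Ω, (q (e 0) n x) ^ 2) + ∫ x in Ω, (q (e 1) n x) ^ 2 := by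
        rw [← hindint n (fun y => sq2 (v n y *ᵥ m)),
          integral_congr_ae (Filter.Eventually.of_forall hsplitval),
          integral_add hint0 hint1]
      have hbound0 := hC0 n h0
      have hbound1 := hC1 n h1
      rw [ha]; dsimp only
      rw [hsplit n, hIA]
      have := hVnn n
      linarith
    obtain ⟨n, hn1, hn2⟩ := ((hbig (C0 + C1 + 1)).and hcomb).exists
    linarith
end
end
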